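/- arXiv:1907.02388 — 4 statements merged into one kernel-verified Lean document; each statement's English description precedes it below -/
import Mathlib

section
/- Let G be a second-countable locally compact Hausdorff group and let (α,𝔲): G ↷ A, (β,𝔳): G ↷ B, (γ,𝔴): G ↷ C be twisted actions on unital C*-algebras. If (φ,u): (A,α,𝔲) → (B,β,𝔳) and (ψ,v): (B,β,𝔳) → (C,γ,𝔴) are cocycle morphisms, then the pair (ψ∘φ, g ↦ ψ⁺(u_g)·v_g) is a cocycle morphism from (A,α,𝔲) to (C,γ,𝔴). Moreover this composition is associative: for a fourth twisted action (δ,𝔵): G ↷ D on a unital C*-algebra and a cocycle morphism (θ,w): (C,γ,𝔴) → (D,δ,𝔵), one has (θ,w)∘((ψ,v)∘(φ,u)) = ((θ,w)∘(ψ,v))∘(φ,u). -/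
/-!
Common definitions: twisted actions of a locally compact group on a unital C*-algebra,
cocycle morphisms between them, and (approximate/asymptotic) unitary equivalence.
-/

noncomputable section

/-- `φ⁺(w) = φ(w) + 1 - φ(1)` for a (not necessarily unital) *-homomorphism between unital
C*-algebras. -/
def plusMap {A B : Type*} [CStarAlgebra A] [CStarAlgebra B] (φ : A →⋆ₙₐ[ℂ] B) (w : A) : B :=
  φ w + 1 - φ 1

/-- A twisted action `(α, 𝔲) : G ↷ A` of a topological group on a unital C*-algebra:
a point-norm continuous map `α : G → Aut(A)` and a norm-continuous map
`𝔲 : G × G → U(A)` satisfying the twisted action identities. -/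
structure TwistedAction (G A : Type*) [Group G] [TopologicalSpace G] [CStarAlgebra A] where
  α : G → (A ≃⋆ₐ[ℂ] A)
  α_cont : ∀ a : A, Continuous fun g => α g a
  u : G → G → A
  u_mem : ∀ s t, u s t ∈ unitary A
  u_cont : Continuous fun p : G × G => u p.1 p.2
  α_one : ∀ a : A, α 1 a = a
  α_mul : ∀ s t : G, ∀ a : A, α s (α t a) = u s t * α (s * t) a * star (u s t)
  u_one_left : ∀ s, u 1 s = 1
  u_one_right : ∀ s, u s 1 = 1
  u_cocycle : ∀ r s t : G, α r (u s t) * u r (s * t) = u r s * u (r * s) t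

/-- A cocycle morphism `(φ, u) : (A, α, 𝔲) → (B, β, 𝔳)` between twisted actions on unital
C*-algebras: a *-homomorphism together with a norm-continuous map `u : G → U(B)` satisfying
the equivariance condition and the cocycle identity. -/
structure CocycleMorphism {G A B : Type*} [Group G] [TopologicalSpace G]
    [CStarAlgebra A] [CStarAlgebra B]
    (Sa : TwistedAction G A) (Sb : TwistedAction G B) where
  φ : A →⋆ₙₐ[ℂ] B
  u : G → B
  u_mem : ∀ g, u g ∈ unitary B
  u_cont : Continuous u
  equivariance : ∀ (g : G) (a : A), u g * Sb.α g (φ a) * star (u g) = φ (Sa.α g a)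
  cocycle : ∀ g h : G,
    plusMap φ (Sa.u g h) = u g * Sb.α g (u h) * Sb.u g h * star (u (g * h))

/-- `(ψ, v) ⪅ᵤ (φ, u)` : the pair `(ψ, v)` is approximately unitarily dominated by `(φ, u)`,
i.e. for every `ε > 0`, finite `F ⊆ A` and compact `K ⊆ G` there is a unitary `w ∈ U(B)` with
`‖ψ(a) - w φ(a) w*‖ ≤ ε` on `F` and `‖v_g - w u_g β_g(w)*‖ ≤ ε` on `K`. -/
def ApproxUDom {G A B : Type*} [Group G] [TopologicalSpace G]
    [CStarAlgebra A] [CStarAlgebra B] (Sb : TwistedAction G B)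
    (ψ : A → B) (v : G → B) (φ : A → B) (u : G → B) : Prop :=
  ∀ ε > (0 : ℝ), ∀ F : Finset A, ∀ K : Set G, IsCompact K →
    ∃ w ∈ unitary B,
      (∀ a ∈ F, ‖ψ a - w * φ a * star w‖ ≤ ε) ∧
      (∀ g ∈ K, ‖v g - w * u g * star (Sb.α g w)‖ ≤ ε)

/-- `(φ, u) ≈ₐᵤ (ψ, v)` : asymptotic unitary equivalence of pairs, witnessed by a
norm-continuous path of unitaries `w : [0,∞) → U(B)` with
`lim_t ‖ψ(a) - w_t φ(a) w_t*‖ = 0` and `lim_t max_{g ∈ K} ‖v_g - w_t u_g β_g(w_t)*‖ = 0`. -/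
def AsympUEquiv {G A B : Type*} [Group G] [TopologicalSpace G]
    [CStarAlgebra A] [CStarAlgebra B] (Sb : TwistedAction G B)
    (φ : A → B) (u : G → B) (ψ : A → B) (v : G → B) : Prop :=
  ∃ w : ℝ → B, Continuous w ∧ (∀ t, w t ∈ unitary B) ∧
    (∀ a : A,
      Filter.Tendsto (fun t => ‖ψ a - w t * φ a * star (w t)‖) Filter.atTop (nhds 0)) ∧
    (∀ K : Set G, IsCompact K → ∀ ε > (0 : ℝ), ∀ᶠ t in Filter.atTop,
      ∀ g ∈ K, ‖v g - w t * u g * star (Sb.α g (w t))‖ ≤ ε)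

end

/-!
Although `φ⁺` is not additive, it is a unital star monoid homomorphism: it maps unitaries to
unitaries and respects products and adjoints. Applying `ψ⁺` to the cocycle identity of `(φ, u)`,
then using the equivariance of `(ψ, v)` in the form `v_g γ_g(ψ⁺(x)) v_g* = ψ⁺(β_g(x))` and the
cocycle identity of `(ψ, v)`, gives the cocycle identity of the composite. Associativity is the
multiplicativity of `θ⁺` together with `(θ ∘ ψ)⁺ = θ⁺ ∘ ψ⁺`.
-/

section PlusMap

variable {A B C : Type*} [CStarAlgebra A] [CStarAlgebra B] [CStarAlgebra C]

lemma plusMap_one (φ : A →⋆ₙₐ[ℂ] B) : plusMap φ 1 = 1 := by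
  simp [plusMap]

lemma plusMap_mul (φ : A →⋆ₙₐ[ℂ] B) (x y : A) :
    plusMap φ (x * y) = plusMap φ x * plusMap φ y := by
  have hx : φ x * φ 1 = φ x := by rw [← map_mul, mul_one]
  have hy : φ 1 * φ y = φ y := by rw [← map_mul, one_mul]
  have h1 : φ 1 * φ 1 = φ 1 := by rw [← map_mul, one_mul]
  simp only [plusMap, map_mul, sub_mul, mul_sub, add_mul, mul_add, one_mul, mul_one, hx, hy, h1]
  abel

lemma plusMap_star (φ : A →⋆ₙₐ[ℂ] B) (x : A) :
    plusMap φ (star x) = star (plusMap φ x) := by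
  have h1 : star (φ 1) = φ 1 := by rw [← map_star, star_one]
  simp only [plusMap, map_star, star_sub, star_add, star_one, h1]

noncomputable def plusStarMonoidHom (φ : A →⋆ₙₐ[ℂ] B) : A →⋆* B where
  toFun := plusMap φ
  map_one' := plusMap_one φ
  map_mul' := plusMap_mul φ
  map_star' := plusMap_star φ

lemma plusMap_mem_unitary (φ : A →⋆ₙₐ[ℂ] B) {w : A} (hw : w ∈ unitary A) :
    plusMap φ w ∈ unitary B :=
  Unitary.map_mem (plusStarMonoidHom φ) hw

lemma plusMap_mul_apply (φ : A →⋆ₙₐ[ℂ] B) (x y : A) : plusMap φ x * φ y = φ (x * y) := by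
  have hy : φ 1 * φ y = φ y := by rw [← map_mul, one_mul]
  simp only [plusMap, sub_mul, add_mul, one_mul, hy, map_mul]
  abel

lemma apply_mul_plusMap (φ : A →⋆ₙₐ[ℂ] B) (x y : A) : φ x * plusMap φ y = φ (x * y) := by
  have hx : φ x * φ 1 = φ x := by rw [← map_mul, mul_one]
  simp only [plusMap, mul_sub, mul_add, mul_one, hx, map_mul]
  abel

lemma plusMap_comp (ψ : B →⋆ₙₐ[ℂ] C) (φ : A →⋆ₙₐ[ℂ] B) (x : A) :
    plusMap (ψ.comp φ) x = plusMap ψ (plusMap φ x) := by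
  simp only [plusMap, map_sub, map_add, NonUnitalStarAlgHom.comp_apply]
  abel

open scoped CStarAlgebra in
lemma continuous_plusMap (φ : A →⋆ₙₐ[ℂ] B) : Continuous (plusMap φ) :=
  ((map_continuous φ).add continuous_const).sub continuous_const

end PlusMap

namespace CocycleMorphism

variable {G A B C : Type*} [Group G] [TopologicalSpace G]
  [CStarAlgebra A] [CStarAlgebra B] [CStarAlgebra C]
  {Sa : TwistedAction G A} {Sb : TwistedAction G B} {Sc : TwistedAction G C}

lemma ext {P P' : CocycleMorphism Sa Sb} (hφ : P.φ = P'.φ) (hu : P.u = P'.u) : P = P' := by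
  cases P; cases P'; subst hφ hu; rfl

lemma equivariance_plusMap (Q : CocycleMorphism Sb Sc) (g : G) (x : B) :
    Q.u g * Sc.α g (plusMap Q.φ x) * star (Q.u g) = plusMap Q.φ (Sb.α g x) := by
  have hx := Q.equivariance g x
  have h1 := Q.equivariance g 1
  have hu : Q.u g * star (Q.u g) = 1 := (Unitary.mem_iff.mp (Q.u_mem g)).2
  simp only [map_one] at h1
  simp only [plusMap, map_sub, map_add, map_one, mul_sub, sub_mul, mul_add, add_mul,
    mul_one, hx, h1, hu]

lemma equivariance_comp (Q : CocycleMorphism Sb Sc) (P : CocycleMorphism Sa Sb) (g : G) (a : A) :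
    plusMap Q.φ (P.u g) * Q.u g * Sc.α g (Q.φ (P.φ a)) * star (plusMap Q.φ (P.u g) * Q.u g)
      = Q.φ (P.φ (Sa.α g a)) :=
  calc plusMap Q.φ (P.u g) * Q.u g * Sc.α g (Q.φ (P.φ a)) * star (plusMap Q.φ (P.u g) * Q.u g)
      = plusMap Q.φ (P.u g) * (Q.u g * Sc.α g (Q.φ (P.φ a)) * star (Q.u g))
          * star (plusMap Q.φ (P.u g)) := by
        simp only [star_mul, mul_assoc]
    _ = Q.φ (P.u g * Sb.α g (P.φ a) * star (P.u g)) := by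
        rw [Q.equivariance, plusMap_mul_apply, ← plusMap_star, apply_mul_plusMap]
    _ = Q.φ (P.φ (Sa.α g a)) := by rw [P.equivariance]

lemma cocycle_comp (Q : CocycleMorphism Sb Sc) (P : CocycleMorphism Sa Sb) (g h : G) :
    plusMap (Q.φ.comp P.φ) (Sa.u g h)
      = plusMap Q.φ (P.u g) * Q.u g * Sc.α g (plusMap Q.φ (P.u h) * Q.u h) * Sc.u g h
          * star (plusMap Q.φ (P.u (g * h)) * Q.u (g * h)) := by
  have hcancel : ∀ x : C, star (Q.u g) * (Q.u g * x) = x := fun x => by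
    rw [← mul_assoc, (Unitary.mem_iff.mp (Q.u_mem g)).1, one_mul]
  rw [plusMap_comp, P.cocycle, plusMap_mul, plusMap_mul, plusMap_mul, plusMap_star,
    Q.cocycle, ← Q.equivariance_plusMap g (P.u h)]
  simp only [map_mul, star_mul, mul_assoc, hcancel]

noncomputable def comp (Q : CocycleMorphism Sb Sc) (P : CocycleMorphism Sa Sb) :
    CocycleMorphism Sa Sc where
  φ := Q.φ.comp P.φ
  u g := plusMap Q.φ (P.u g) * Q.u g
  u_mem g := mul_mem (plusMap_mem_unitary Q.φ (P.u_mem g)) (Q.u_mem g)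
  u_cont := ((continuous_plusMap Q.φ).comp P.u_cont).mul Q.u_cont
  equivariance := Q.equivariance_comp P
  cocycle := Q.cocycle_comp P

lemma comp_assoc {D : Type*} [CStarAlgebra D] {Sd : TwistedAction G D}
    (R : CocycleMorphism Sc Sd) (Q : CocycleMorphism Sb Sc) (P : CocycleMorphism Sa Sb) :
    R.comp (Q.comp P) = (R.comp Q).comp P :=
  ext rfl <| funext fun g => by
    simp only [comp, plusMap_mul, plusMap_comp, mul_assoc]

end CocycleMorphism

theorem cocycleMorphism_comp_and_assoc_general
    {G A B C D : Type*} [Group G] [TopologicalSpace G]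
    [CStarAlgebra A] [CStarAlgebra B] [CStarAlgebra C] [CStarAlgebra D]
    (Sα : TwistedAction G A) (Sβ : TwistedAction G B) (Sγ : TwistedAction G C)
    (Sδ : TwistedAction G D)
    (P : CocycleMorphism Sα Sβ) (Q : CocycleMorphism Sβ Sγ) (R : CocycleMorphism Sγ Sδ) :
    (∃ QP : CocycleMorphism Sα Sγ,
        QP.φ = Q.φ.comp P.φ ∧ ∀ g : G, QP.u g = plusMap Q.φ (P.u g) * Q.u g)
    ∧ R.φ.comp (Q.φ.comp P.φ) = (R.φ.comp Q.φ).comp P.φ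
    ∧ (∀ g : G,
        plusMap R.φ (plusMap Q.φ (P.u g) * Q.u g) * R.u g
          = plusMap (R.φ.comp Q.φ) (P.u g) * (plusMap R.φ (Q.u g) * R.u g)) :=
  have hassoc := CocycleMorphism.comp_assoc R Q P
  ⟨⟨Q.comp P, rfl, fun _ => rfl⟩, congrArg CocycleMorphism.φ hassoc,
    congrFun (congrArg CocycleMorphism.u hassoc)⟩

/-- The composition `(ψ∘φ, g ↦ ψ⁺(u_g)·v_g)` of two cocycle morphisms between
twisted actions on unital C*-algebras is again a cocycle morphism, and this composition is
associative (for a fourth twisted action and a third cocycle morphism). -/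
theorem cocycleMorphism_comp_and_assoc
    {G A B C D : Type*} [Group G] [TopologicalSpace G] [IsTopologicalGroup G]
    [LocallyCompactSpace G] [SecondCountableTopology G] [T2Space G]
    [CStarAlgebra A] [CStarAlgebra B] [CStarAlgebra C] [CStarAlgebra D]
    (Sα : TwistedAction G A) (Sβ : TwistedAction G B) (Sγ : TwistedAction G C)
    (Sδ : TwistedAction G D)
    (P : CocycleMorphism Sα Sβ) (Q : CocycleMorphism Sβ Sγ) (R : CocycleMorphism Sγ Sδ) :
    (∃ QP : CocycleMorphism Sα Sγ,
        QP.φ = Q.φ.comp P.φ ∧ ∀ g : G, QP.u g = plusMap Q.φ (P.u g) * Q.u g)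
    ∧ R.φ.comp (Q.φ.comp P.φ) = (R.φ.comp Q.φ).comp P.φ
    ∧ (∀ g : G,
        plusMap R.φ (plusMap Q.φ (P.u g) * Q.u g) * R.u g
          = plusMap (R.φ.comp Q.φ) (P.u g) * (plusMap R.φ (Q.u g) * R.u g)) :=
  cocycleMorphism_comp_and_assoc_general Sα Sβ Sγ Sδ P Q R
end

section
/- Let G be a second-countable locally compact Hausdorff group and let (α,𝔲): G ↷ A and (β,𝔳): G ↷ B be gently twisted actions on C*-algebras. Let Λ be a directed set and let (φ^λ,u^λ)_{λ∈Λ} be a net of proper cocycle morphisms (A,α,𝔲) → (B,β,𝔳) such that for every a ∈ A the net (φ^λ(a))_λ is Cauchy in norm, and for every compact set K ⊆ G the net of restrictions (u^λ|_K)_λ is uniformly Cauchy in norm. Then there exists a proper cocycle morphism (φ,u): (A,α,𝔲) → (B,β,𝔳) such that ‖φ^λ(a) − φ(a)‖ → 0 for every a ∈ A and sup_{g∈K} ‖u^λ_g − u_g‖ → 0 for every compact set K ⊆ G; that is, the set of proper cocycle morphisms is complete in its natural uniform topology. -/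
/-!
Common definitions: gently twisted actions of a locally compact group on a (not necessarily
unital) C*-algebra, proper cocycle morphisms between them, and the relevant equivalence
relations.  `Unitization ℂ A` plays the role of the minimal unitization `A†`, and
`Unitization.starMap` is the canonical unital extension `φ†`.
-/

noncomputable section

/-- The canonical unital extension `φ†` of a *-homomorphism to the minimal unitizations. -/
abbrev NonUnitalStarAlgHom.dag {A B : Type*} [NonUnitalCStarAlgebra A] [NonUnitalCStarAlgebra B]
    (φ : A →⋆ₙₐ[ℂ] B) : Unitization ℂ A →⋆ₐ[ℂ] Unitization ℂ B := Unitization.starMap φ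

/-- The canonical unital extension `α†` of a *-automorphism to the minimal unitization. -/
abbrev StarAlgEquiv.dag {A : Type*} [NonUnitalCStarAlgebra A] (e : A ≃⋆ₐ[ℂ] A) :
    Unitization ℂ A →⋆ₐ[ℂ] Unitization ℂ A := Unitization.starMap (e : A →⋆ₙₐ[ℂ] A)

/-- Membership in `U(1+A)`: a unitary of the minimal unitization `A†` whose scalar part is `1`,
i.e. which differs from `1` by an element of `A`. -/
def IsU1 {A : Type*} [NonUnitalCStarAlgebra A] (u : Unitization ℂ A) : Prop :=
  u ∈ unitary (Unitization ℂ A) ∧ u.fst = 1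

/-- A gently twisted action `(α, 𝔲) : G ↷ A` of a topological group on a C*-algebra:
a point-norm continuous map `α : G → Aut(A)` together with a norm-continuous 2-cocycle
`𝔲 : G × G → U(1+A)` satisfying the twisted action identities. -/
structure GentlyTwistedAction (G A : Type*) [Group G] [TopologicalSpace G]
    [NonUnitalCStarAlgebra A] where
  α : G → (A ≃⋆ₐ[ℂ] A)
  α_cont : ∀ a : A, Continuous fun g => α g a
  u : G → G → Unitization ℂ A
  u_mem : ∀ s t, IsU1 (u s t)
  u_cont : Continuous fun p : G × G => u p.1 p.2
  α_one : ∀ a : A, α 1 a = a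
  α_mul : ∀ s t : G, ∀ a : A,
    ((α s (α t a) : A) : Unitization ℂ A)
      = u s t * ((α (s * t) a : A) : Unitization ℂ A) * star (u s t)
  u_one_left : ∀ s, u 1 s = 1
  u_one_right : ∀ s, u s 1 = 1
  u_cocycle : ∀ r s t : G, (α r).dag (u s t) * u r (s * t) = u r s * u (r * s) t

/-- A proper cocycle morphism `(φ, u) : (A, α, 𝔲) → (B, β, 𝔳)` between gently twisted actions:
a *-homomorphism `φ : A → B` together with a norm-continuous map `u : G → U(1+B)` satisfying
the equivariance condition and the cocycle identity. -/
structure ProperCocycleMorphism {G A B : Type*} [Group G] [TopologicalSpace G]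
    [NonUnitalCStarAlgebra A] [NonUnitalCStarAlgebra B]
    (Sa : GentlyTwistedAction G A) (Sb : GentlyTwistedAction G B) where
  φ : A →⋆ₙₐ[ℂ] B
  u : G → Unitization ℂ B
  u_mem : ∀ g, IsU1 (u g)
  u_cont : Continuous u
  equivariance : ∀ (g : G) (a : A),
    u g * ((Sb.α g (φ a) : B) : Unitization ℂ B) * star (u g)
      = ((φ (Sa.α g a) : B) : Unitization ℂ B)
  cocycle : ∀ g h : G,
    φ.dag (Sa.u g h) = u g * (Sb.α g).dag (u h) * Sb.u g h * star (u (g * h))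

/-- Proper approximate unitary equivalence `(φ,u) ≈_pu (ψ,v)` of pairs, relative to the target
gently twisted action: for every `ε > 0`, finite `F ⊆ A` and compact `K ⊆ G` there is a
unitary `w ∈ U(1+B)` with `‖ψ(a) - w φ(a) w*‖ ≤ ε` on `F` and `‖v_g - w u_g β†_g(w)*‖ ≤ ε`
on `K`. -/
def ProperApproxUEquiv {G A B : Type*} [Group G] [TopologicalSpace G]
    [NonUnitalCStarAlgebra A] [NonUnitalCStarAlgebra B]
    (Sb : GentlyTwistedAction G B)
    (φ : A → B) (u : G → Unitization ℂ B) (ψ : A → B) (v : G → Unitization ℂ B) : Prop :=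
  ∀ ε > (0 : ℝ), ∀ F : Finset A, ∀ K : Set G, IsCompact K →
    ∃ w : Unitization ℂ B, IsU1 w ∧
      (∀ a ∈ F,
        ‖((ψ a : B) : Unitization ℂ B) - w * ((φ a : B) : Unitization ℂ B) * star w‖ ≤ ε) ∧
      (∀ g ∈ K, ‖v g - w * u g * star ((Sb.α g).dag w)‖ ≤ ε)

/-- Proper asymptotic unitary equivalence of pairs, witnessed by a norm-continuous path of
unitaries `w : [0,∞) → U(1+B)`. -/
def ProperAsympUEquiv {G A B : Type*} [Group G] [TopologicalSpace G]
    [NonUnitalCStarAlgebra A] [NonUnitalCStarAlgebra B]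
    (Sb : GentlyTwistedAction G B)
    (φ : A → B) (u : G → Unitization ℂ B) (ψ : A → B) (v : G → Unitization ℂ B) : Prop :=
  ∃ w : ℝ → Unitization ℂ B, Continuous w ∧ (∀ t, IsU1 (w t)) ∧
    (∀ a : A, Filter.Tendsto
      (fun t => ‖((ψ a : B) : Unitization ℂ B) - w t * ((φ a : B) : Unitization ℂ B)
          * star (w t)‖)
      Filter.atTop (nhds 0)) ∧
    (∀ K : Set G, IsCompact K → ∀ ε > (0 : ℝ), ∀ᶠ t in Filter.atTop,
      ∀ g ∈ K, ‖v g - w t * u g * star ((Sb.α g).dag (w t))‖ ≤ ε)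

end

/-!
The limit `(φ, u)` is taken pointwise: each net `φ^λ(a)` and `u^λ_g` is Cauchy in a complete
space. The *-homomorphism identities, membership in `U(1+B)`, equivariance and the cocycle
identity are closed conditions in the values `φ(a)` and `u_g` (the unital extensions `φ†` and
`β†_g` depend continuously on them), so they pass to the limit. Continuity of `u` follows since
the convergence is uniform on compact sets and `G` is locally compact.
-/

open Filter Topology
open scoped CStarAlgebra

section CauchyNets

variable {ι α E : Type*} [Preorder ι] [SeminormedAddCommGroup E]

lemma uniformCauchySeqOn_of_norm_sub_le (F : ι → α → E) (s : Set α)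
    (h : ∀ ε > (0 : ℝ), ∃ l₀ : ι, ∀ l₁, l₀ ≤ l₁ → ∀ l₂, l₀ ≤ l₂ → ∀ x ∈ s,
      ‖F l₁ x - F l₂ x‖ ≤ ε) :
    UniformCauchySeqOn F atTop s := by
  intro u hu
  obtain ⟨ε, hε, hεu⟩ := Metric.mem_uniformity_dist.mp hu
  obtain ⟨l₀, hl₀⟩ := h (ε / 2) (half_pos hε)
  filter_upwards [prod_mem_prod (mem_atTop l₀) (mem_atTop l₀)] with l ⟨h₁, h₂⟩ x hx
  exact hεu ((dist_eq_norm _ _).trans_lt ((hl₀ _ h₁ _ h₂ x hx).trans_lt (half_lt_self hε)))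

lemma cauchySeq_of_norm_sub_le [IsDirected ι (· ≤ ·)] [Nonempty ι] (f : ι → E)
    (h : ∀ ε > (0 : ℝ), ∃ l₀ : ι, ∀ l₁, l₀ ≤ l₁ → ∀ l₂, l₀ ≤ l₂ → ‖f l₁ - f l₂‖ ≤ ε) :
    CauchySeq f :=
  (uniformCauchySeqOn_of_norm_sub_le (fun l (_ : Unit) => f l) Set.univ
    fun ε hε => (h ε hε).imp fun _ hl l₁ h₁ l₂ h₂ _ _ => hl l₁ h₁ l₂ h₂).cauchy_map
      (Set.mem_univ ())

end CauchyNets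

def nonUnitalStarAlgHomOfTendsto {ι R A B : Type*} [Monoid R] [NonUnitalNonAssocSemiring A]
    [DistribMulAction R A] [Star A] [NonUnitalNonAssocSemiring B] [DistribMulAction R B]
    [Star B] [TopologicalSpace B] [T2Space B] [ContinuousAdd B] [ContinuousMul B]
    [ContinuousStar B] [ContinuousConstSMul R B] {l : Filter ι} [l.NeBot]
    (φ : ι → A →⋆ₙₐ[R] B) (f : A → B) (h : ∀ a, Tendsto (fun i => φ i a) l (𝓝 (f a))) :
    A →⋆ₙₐ[R] B where
  toFun := f
  map_smul' c a := tendsto_nhds_unique (h (c • a)) <| by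
    simpa only [map_smul, MonoidHom.id_apply] using (h a).const_smul c
  map_zero' := tendsto_nhds_unique (h 0) <| by simpa only [map_zero] using tendsto_const_nhds
  map_add' a b := tendsto_nhds_unique (h (a + b)) <| by
    simpa only [map_add] using (h a).add (h b)
  map_mul' a b := tendsto_nhds_unique (h (a * b)) <| by
    simpa only [map_mul] using (h a).mul (h b)
  map_star' a := tendsto_nhds_unique (h (star a)) <| by
    simpa only [map_star] using (h a).star

namespace Unitization

variable {A B : Type*} [NonUnitalCStarAlgebra A] [NonUnitalCStarAlgebra B]

lemma starMap_apply_eq (ψ : A →⋆ₙₐ[ℂ] B) (x : Unitization ℂ A) :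
    starMap ψ x = algebraMap ℂ _ x.fst + inr (ψ x.snd) := by
  conv_lhs => rw [← inl_fst_add_inr_snd_eq x]
  rw [map_add, starMap_inr, starMap_inl]

lemma tendsto_starMap_apply {ι : Type*} {l : Filter ι} {φ : ι → A →⋆ₙₐ[ℂ] B}
    {ψ : A →⋆ₙₐ[ℂ] B} (h : ∀ a, Tendsto (fun i => φ i a) l (𝓝 (ψ a))) (x : Unitization ℂ A) :
    Tendsto (fun i => starMap (φ i) x) l (𝓝 (starMap ψ x)) := by
  simp only [starMap_apply_eq]
  exact tendsto_const_nhds.add ((continuous_inr.tendsto _).comp (h x.snd))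

end Unitization

lemma isClosed_setOf_isU1 {A : Type*} [NonUnitalCStarAlgebra A] :
    IsClosed {u : Unitization ℂ A | IsU1 u} :=
  isClosed_unitary.inter (isClosed_eq Unitization.continuous_fst continuous_const)

theorem properCocycleMorphism_complete_general
    {G A B : Type*} [Group G] [TopologicalSpace G]
    [LocallyCompactSpace G]
    [NonUnitalCStarAlgebra A] [NonUnitalCStarAlgebra B]
    (Sα : GentlyTwistedAction G A) (Sβ : GentlyTwistedAction G B)
    {Λ : Type*} [Preorder Λ] [IsDirected Λ (· ≤ ·)] [Nonempty Λ]
    (P : Λ → ProperCocycleMorphism Sα Sβ)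
    (hφ : ∀ a : A, ∀ ε > (0 : ℝ), ∃ l₀ : Λ, ∀ l₁, l₀ ≤ l₁ → ∀ l₂, l₀ ≤ l₂ →
      ‖(P l₁).φ a - (P l₂).φ a‖ ≤ ε)
    (hu : ∀ K : Set G, IsCompact K → ∀ ε > (0 : ℝ), ∃ l₀ : Λ, ∀ l₁, l₀ ≤ l₁ → ∀ l₂, l₀ ≤ l₂ →
      ∀ g ∈ K, ‖(P l₁).u g - (P l₂).u g‖ ≤ ε) :
    ∃ Q : ProperCocycleMorphism Sα Sβ,
      (∀ a : A,
        Filter.Tendsto (fun l => ‖(P l).φ a - Q.φ a‖) Filter.atTop (nhds 0)) ∧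
      (∀ K : Set G, IsCompact K → ∀ ε > (0 : ℝ),
        ∀ᶠ l in Filter.atTop, ∀ g ∈ K, ‖(P l).u g - Q.u g‖ ≤ ε) := by
  choose F hF using fun a => cauchySeq_tendsto_of_complete (cauchySeq_of_norm_sub_le _ (hφ a))
  have hcauchy K (hK : IsCompact K) := uniformCauchySeqOn_of_norm_sub_le _ K (hu K hK)
  have hUlim (g : G) : ∃ v, Tendsto (fun l => (P l).u g) atTop (𝓝 v) :=
    CompleteSpace.complete ((hcauchy {g} isCompact_singleton).cauchy_map rfl)
  choose U hU using hUlim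
  have hUK K (hK : IsCompact K) : TendstoUniformlyOn (fun l => (P l).u) U atTop K :=
    (hcauchy K hK).tendstoUniformlyOn_of_tendsto fun g _ => hU g
  let φ := nonUnitalStarAlgHomOfTendsto (fun l => (P l).φ) F hF
  have hinr : Continuous (Unitization.inr : B → Unitization ℂ B) := Unitization.continuous_inr
  refine ⟨{ φ, u := U
            u_mem g := isClosed_setOf_isU1.mem_of_tendsto (hU g) (.of_forall (P · |>.u_mem g))
            u_cont := (tendstoLocallyUniformly_iff_forall_isCompact.2 hUK).continuous
              (.of_forall (P · |>.u_cont))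
            equivariance g a := tendsto_nhds_unique
              ((((hU g).mul ((hinr.tendsto _).comp ((map_continuous (Sβ.α g)).tendsto _ |>.comp
                (hF a)))).mul (hU g).star).congr fun l => (P l).equivariance g a)
              ((hinr.tendsto _).comp (hF _))
            cocycle g h := tendsto_nhds_unique
              ((Unitization.tendsto_starMap_apply hF _).congr fun l => (P l).cocycle g h)
              ((((hU g).mul ((map_continuous _).tendsto _ |>.comp (hU h))).mul
                tendsto_const_nhds).mul (hU (g * h)).star) },
    fun a => tendsto_iff_norm_sub_tendsto_zero.1 (hF a), fun K hK ε hε => ?_⟩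
  filter_upwards [Metric.tendstoUniformlyOn_iff.1 (hUK K hK) ε hε] with l hl g hg
  rw [← dist_eq_norm, dist_comm]
  exact (hl g hg).le

/-- The set of proper cocycle morphisms between two gently twisted actions is
complete in its natural uniform topology: every net `(φ^λ, u^λ)` of proper cocycle morphisms
which is Cauchy (pointwise in norm for the *-homomorphisms, uniformly in norm over compact
subsets of `G` for the unitary parts) converges to a proper cocycle morphism `(φ, u)`. -/
theorem properCocycleMorphism_complete
    {G A B : Type*} [Group G] [TopologicalSpace G] [IsTopologicalGroup G]
    [LocallyCompactSpace G] [SecondCountableTopology G] [T2Space G]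
    [NonUnitalCStarAlgebra A] [NonUnitalCStarAlgebra B]
    (Sα : GentlyTwistedAction G A) (Sβ : GentlyTwistedAction G B)
    {Λ : Type*} [Preorder Λ] [IsDirected Λ (· ≤ ·)] [Nonempty Λ]
    (P : Λ → ProperCocycleMorphism Sα Sβ)
    (hφ : ∀ a : A, ∀ ε > (0 : ℝ), ∃ l₀ : Λ, ∀ l₁, l₀ ≤ l₁ → ∀ l₂, l₀ ≤ l₂ →
      ‖(P l₁).φ a - (P l₂).φ a‖ ≤ ε)
    (hu : ∀ K : Set G, IsCompact K → ∀ ε > (0 : ℝ), ∃ l₀ : Λ, ∀ l₁, l₀ ≤ l₁ → ∀ l₂, l₀ ≤ l₂ →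
      ∀ g ∈ K, ‖(P l₁).u g - (P l₂).u g‖ ≤ ε) :
    ∃ Q : ProperCocycleMorphism Sα Sβ,
      (∀ a : A,
        Filter.Tendsto (fun l => ‖(P l).φ a - Q.φ a‖) Filter.atTop (nhds 0)) ∧
      (∀ K : Set G, IsCompact K → ∀ ε > (0 : ℝ),
        ∀ᶠ l in Filter.atTop, ∀ g ∈ K, ‖(P l).u g - Q.u g‖ ≤ ε) :=
  properCocycleMorphism_complete_general Sα Sβ P hφ hu
end

section
/- Let G be a second-countable locally compact Hausdorff group, let (φ_n,u⁽ⁿ⁾): (A_n,α⁽ⁿ⁾,𝔲⁽ⁿ⁾) → (A_{n+1},α⁽ⁿ⁺¹⁾,𝔲⁽ⁿ⁺¹⁾) be an inductive system of proper cocycle morphisms between gently twisted G-C*-algebras, and let (A, (φ_{n,∞})_{n≥1}) be a realization of the C*-inductive limit of the underlying system. Then: (1) there exists a unique gently twisted action (α,𝔲): G ↷ A such that α_g ∘ φ_{n,∞} = φ_{n,∞} ∘ Ad(𝕌⁽ⁿ⁻¹⁾_g) ∘ α⁽ⁿ⁾_g for all n ≥ 1 and g ∈ G, and 𝔲_{g,h}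 = φ_{1,∞}†(𝔲⁽¹⁾_{g,h}) for all g,h ∈ G; (2) for each n the pair (φ,u)_{n,∞} := (φ_{n,∞}, g ↦ φ_{n,∞}†(𝕌⁽ⁿ⁻¹⁾_g)*) is a proper cocycle morphism (A_n,α⁽ⁿ⁾,𝔲⁽ⁿ⁾) → (A,α,𝔲) satisfying (φ,u)_{n,∞} = (φ,u)_{n+1,∞} ∘ (φ_n,u⁽ⁿ⁾); and (3) (A,α,𝔲) with these morphisms has the universal property: for every gently twisted G-C*-algebra (B,β,𝔳) and every family of proper cocycle morphisms (θ_n,v⁽ⁿ⁾): (A_n,α⁽ⁿ⁾,𝔲⁽ⁿ⁾) → (B,β,𝔳) with (θ_n,v⁽ⁿ⁾) = (θ_{n+1},v⁽ⁿ⁺¹⁾) ∘ (φ_n,u⁽ⁿ⁾) for all n, there is a unique proper cocycle morphism (Θ,V): (A,α,𝔲) → (B,β,𝔳) with (Θ,V) ∘ (φ,u)_{n,∞} = (θ_n,v⁽ⁿ⁾) for all n. -/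
/-!
Perturbing each `α⁽ⁿ⁾` by the accumulated unitaries `𝕌⁽ⁿ⁾` gives twisted actions
`ρ⁽ⁿ⁾ = Ad(𝕌⁽ⁿ⁾) ∘ α⁽ⁿ⁾` with twists `𝕌⁽ⁿ⁾_s α⁽ⁿ⁾†_s(𝕌⁽ⁿ⁾_t) 𝔲⁽ⁿ⁾_{s,t} 𝕌⁽ⁿ⁾*_{st}` for which
the connecting maps are strictly equivariant: the cocycle identity of `(φ_n, u⁽ⁿ⁾)` is exactly
what makes `φ_n` carry both the automorphisms and the twists of level `n` to those of level
`n + 1`. A compatible family of *-homomorphisms out of the levels is contractive for the limit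
norm, so it extends by continuity from the dense union of the images; this produces the
automorphisms of the limit and the universal morphisms, and every identity to be checked
(twisted multiplicativity, cocycle identities, equivariance) is an identity between continuous
maps that reduces on the dense union to the corresponding identity at a finite level. Point-norm
continuity passes to the limit because *-homomorphisms are contractive, hence equicontinuous.
-/

open Filter Topology Unitization
open scoped CStarAlgebra

namespace Unitary

variable {M : Type*} [Monoid M] [StarMul M] {u : M}

lemma star_mul_cancel_left_of_mem (hu : u ∈ unitary M) (x : M) : star u * (u * x) = x := by
  rw [← mul_assoc, star_mul_self_of_mem hu, one_mul]

lemma mul_star_cancel_left_of_mem (hu : u ∈ unitary M) (x : M) : u * (star u * x) = x := by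
  rw [← mul_assoc, mul_star_self_of_mem hu, one_mul]

end Unitary

namespace Unitization

variable {A B C : Type*} [NonUnitalCStarAlgebra A] [NonUnitalCStarAlgebra B]
  [NonUnitalCStarAlgebra C]

lemma fst_starMap (φ : A →⋆ₙₐ[ℂ] B) (x : Unitization ℂ A) : (starMap φ x).fst = x.fst := by
  induction x using Unitization.ind with
  | inl_add_inr r a => simp [algebraMap_eq_inl]

lemma starMap_starMap (φ : B →⋆ₙₐ[ℂ] C) (ψ : A →⋆ₙₐ[ℂ] B) (x : Unitization ℂ A) :
    starMap φ (starMap ψ x) = starMap (φ.comp ψ) x := by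
  rw [starMap_comp]; rfl

lemma inr_snd_mul_inr_mul (u v : Unitization ℂ A) (a : A) :
    (((u * a * v).snd : A) : Unitization ℂ A) = u * a * v :=
  Unitization.ext (by simp [fst_mul]) rfl

lemma starMap_eq_conj {φ ψ : A →⋆ₙₐ[ℂ] B} {v : Unitization ℂ B} (hv : v ∈ unitary _)
    (h : ∀ a, (ψ a : Unitization ℂ B) = v * φ a * star v) (x : Unitization ℂ A) :
    starMap ψ x = v * starMap φ x * star v := by
  induction x using Unitization.ind with
  | inl_add_inr r a =>
    rw [map_add, map_add, mul_add, add_mul, starMap_inl, starMap_inl, starMap_inr, starMap_inr,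
      h, ← Algebra.commutes, mul_assoc, mul_assoc, Unitary.mul_star_self_of_mem hv, mul_one]

def conjAut (u : unitary (Unitization ℂ A)) : A ≃⋆ₐ[ℂ] A where
  toFun a := ((u : Unitization ℂ A) * a * star (u : Unitization ℂ A)).snd
  invFun a := (star (u : Unitization ℂ A) * a * u).snd
  left_inv a := inr_injective (R := ℂ) <| by
    dsimp only
    rw [inr_snd_mul_inr_mul, inr_snd_mul_inr_mul]
    simp only [mul_assoc, Unitary.star_mul_cancel_left_of_mem u.2, Unitary.star_mul_self_of_mem u.2,
      mul_one]
  right_inv a := inr_injective (R := ℂ) <| by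
    dsimp only
    rw [inr_snd_mul_inr_mul, inr_snd_mul_inr_mul]
    simp only [mul_assoc, Unitary.mul_star_cancel_left_of_mem u.2, Unitary.mul_star_self_of_mem u.2,
      mul_one]
  map_mul' a b := inr_injective (R := ℂ) <| by
    rw [inr_snd_mul_inr_mul, inr_mul, inr_mul, inr_snd_mul_inr_mul, inr_snd_mul_inr_mul]
    simp only [mul_assoc, Unitary.star_mul_cancel_left_of_mem u.2]
  map_add' a b := inr_injective (R := ℂ) <| by
    rw [inr_snd_mul_inr_mul, inr_add, inr_add, inr_snd_mul_inr_mul, inr_snd_mul_inr_mul,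
      mul_add, add_mul]
  map_star' a := inr_injective (R := ℂ) <| by
    rw [inr_snd_mul_inr_mul, inr_star, inr_star, inr_snd_mul_inr_mul]
    simp only [star_mul, star_star, mul_assoc]
  map_smul' c a := inr_injective (R := ℂ) <| by
    rw [inr_snd_mul_inr_mul, inr_smul, inr_smul, inr_snd_mul_inr_mul, mul_smul_comm,
      smul_mul_assoc]

lemma inr_conjAut (u : unitary (Unitization ℂ A)) (a : A) :
    (conjAut u a : Unitization ℂ A) = u * a * star (u : Unitization ℂ A) :=
  inr_snd_mul_inr_mul _ _ a

end Unitization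

namespace IsU1

variable {A B : Type*} [NonUnitalCStarAlgebra A] [NonUnitalCStarAlgebra B]
  {u v : Unitization ℂ A}

lemma one : IsU1 (1 : Unitization ℂ A) := ⟨one_mem _, rfl⟩

lemma mul (hu : IsU1 u) (hv : IsU1 v) : IsU1 (u * v) :=
  ⟨mul_mem hu.1 hv.1, by rw [fst_mul, hu.2, hv.2, one_mul]⟩

protected lemma star (hu : IsU1 u) : IsU1 (star u) :=
  ⟨Unitary.star_mem hu.1, by rw [fst_star, hu.2, star_one]⟩

lemma starMap (φ : A →⋆ₙₐ[ℂ] B) (hu : IsU1 u) : IsU1 (Unitization.starMap φ u) :=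
  ⟨Unitary.map_mem _ hu.1, by rw [fst_starMap, hu.2]⟩

end IsU1

structure IsCStarInductiveLimit {A : ℕ → Type*} [∀ n, NonUnitalCStarAlgebra (A n)]
    {L : Type*} [NonUnitalCStarAlgebra L] (p : ∀ n, A n →⋆ₙₐ[ℂ] A (n + 1))
    (chain : ∀ n m, A n →⋆ₙₐ[ℂ] A m) (ι : ∀ n, A n →⋆ₙₐ[ℂ] L) : Prop where
  chain_self : ∀ n, chain n n = NonUnitalStarAlgHom.id ℂ (A n)
  chain_succ : ∀ n m, n ≤ m → chain n (m + 1) = (p m).comp (chain n m)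
  compat : ∀ n, ι n = (ι (n + 1)).comp (p n)
  dense : Dense (⋃ n, Set.range (ι n))
  tendsto_norm : ∀ n a, Tendsto (fun m => ‖chain n m a‖) atTop (𝓝 ‖ι n a‖)

namespace IsCStarInductiveLimit

variable {A : ℕ → Type*} [∀ n, NonUnitalCStarAlgebra (A n)] {L : Type*}
  [NonUnitalCStarAlgebra L] {B : Type*} [NonUnitalCStarAlgebra B]
  {p : ∀ n, A n →⋆ₙₐ[ℂ] A (n + 1)} {chain : ∀ n m, A n →⋆ₙₐ[ℂ] A m} {ι : ∀ n, A n →⋆ₙₐ[ℂ] L}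
  (hL : IsCStarInductiveLimit p chain ι) (f : ∀ n, A n →⋆ₙₐ[ℂ] B)
  (hf : ∀ n, f n = (f (n + 1)).comp (p n))

noncomputable def liftOnUnion (x : ⋃ n, Set.range (ι n)) : B :=
  f _ (Set.mem_iUnion.mp x.2).choose_spec.choose

include hL

lemma comp_chain {C : Type*} [NonUnitalCStarAlgebra C] {g : ∀ n, A n →⋆ₙₐ[ℂ] C}
    (hg : ∀ n, g n = (g (n + 1)).comp (p n)) {n m : ℕ} (hnm : n ≤ m) (a : A n) :
    g n a = g m (chain n m a) := by
  induction m, hnm using Nat.le_induction with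
  | base => rw [hL.chain_self]; rfl
  | succ m hm ih => rw [ih, hg m, hL.chain_succ n m hm]; rfl

lemma exists_common_level {x y : L} (hx : x ∈ ⋃ n, Set.range (ι n))
    (hy : y ∈ ⋃ n, Set.range (ι n)) : ∃ k a b, ι k a = x ∧ ι k b = y := by
  obtain ⟨n, a, rfl⟩ := Set.mem_iUnion.mp hx
  obtain ⟨m, b, rfl⟩ := Set.mem_iUnion.mp hy
  exact ⟨max n m, chain n _ a, chain m _ b, (hL.comp_chain hL.compat (le_max_left n m) a).symm,
    (hL.comp_chain hL.compat (le_max_right n m) b).symm⟩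

lemma ext_of_levels {Y : Type*} [TopologicalSpace Y] [T2Space Y] {F F' : L → Y}
    (hF : Continuous F) (hF' : Continuous F') (h : ∀ n a, F (ι n a) = F' (ι n a)) : F = F' :=
  hF.ext_on hL.dense hF' fun x hx => by
    obtain ⟨n, a, rfl⟩ := Set.mem_iUnion.mp hx
    exact h n a

lemma ext_of_levels₂ {Y : Type*} [TopologicalSpace Y] [T2Space Y] {F F' : L → L → Y}
    (hF : Continuous fun q : L × L => F q.1 q.2) (hF' : Continuous fun q : L × L => F' q.1 q.2)
    (h : ∀ n a b, F (ι n a) (ι n b) = F' (ι n a) (ι n b)) : F = F' := by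
  have := hF.ext_on (hL.dense.prod hL.dense) hF' fun q ⟨hx, hy⟩ => by
    obtain ⟨k, a, b, hx, hy⟩ := hL.exists_common_level hx hy
    simp only [← hx, ← hy, h]
  exact funext₂ fun x y => congrFun this (x, y)

include hf in
lemma norm_sub_le {n m : ℕ} (a : A n) (b : A m) : ‖f n a - f m b‖ ≤ ‖ι n a - ι m b‖ := by
  set k := max n m
  have hn : n ≤ k := le_max_left n m
  have hm : m ≤ k := le_max_right n m
  rw [hL.comp_chain hf hn, hL.comp_chain hf hm, hL.comp_chain hL.compat hn,
    hL.comp_chain hL.compat hm, ← map_sub, ← map_sub]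
  refine ge_of_tendsto (hL.tendsto_norm k _) (eventually_atTop.mpr ⟨k, fun j hj => ?_⟩)
  rw [hL.comp_chain hf hj]
  exact NonUnitalStarAlgHom.norm_apply_le _ _

include hf in
lemma liftOnUnion_eq {n : ℕ} {a : A n} {x : ⋃ n, Set.range (ι n)} (hx : ι n a = x) :
    liftOnUnion f x = f n a := by
  have hrep := (Set.mem_iUnion.mp x.2).choose_spec.choose_spec
  rw [← sub_eq_zero, ← norm_le_zero_iff]
  refine (hL.norm_sub_le f hf _ a).trans_eq ?_
  rw [hrep, hx, sub_self, norm_zero]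

include hf in
lemma uniformContinuous_liftOnUnion : UniformContinuous (liftOnUnion (ι := ι) f) := by
  refine (LipschitzWith.of_dist_le_mul fun x y => ?_).uniformContinuous (K := 1)
  obtain ⟨n, a, hx⟩ := Set.mem_iUnion.mp x.2
  obtain ⟨m, b, hy⟩ := Set.mem_iUnion.mp y.2
  rw [NNReal.coe_one, one_mul, Subtype.dist_eq, dist_eq_norm, dist_eq_norm,
    hL.liftOnUnion_eq f hf hx, hL.liftOnUnion_eq f hf hy, ← hx, ← hy]
  exact hL.norm_sub_le f hf a b

noncomputable def liftFun : L → B := hL.dense.extend (liftOnUnion f)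

include hf in
lemma continuous_liftFun : Continuous (hL.liftFun f) :=
  (hL.dense.uniformContinuous_extend (hL.uniformContinuous_liftOnUnion f hf)).continuous

include hf in
lemma liftFun_apply (n : ℕ) (a : A n) : hL.liftFun f (ι n a) = f n a := by
  have hmem : ι n a ∈ ⋃ n, Set.range (ι n) := Set.mem_iUnion.mpr ⟨n, a, rfl⟩
  exact (hL.dense.extend_of_ind (hL.uniformContinuous_liftOnUnion f hf) ⟨_, hmem⟩).trans
    (hL.liftOnUnion_eq f hf rfl)

noncomputable def lift : L →⋆ₙₐ[ℂ] B where
  toFun := hL.liftFun f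
  map_smul' c := congrFun <| hL.ext_of_levels ((hL.continuous_liftFun f hf).comp
      (continuous_const_smul c)) ((hL.continuous_liftFun f hf).const_smul c) fun n a => by
    simp only [← map_smul, hL.liftFun_apply f hf]
    rfl
  map_zero' := by rw [← map_zero (ι 0), hL.liftFun_apply f hf, map_zero]
  map_add' := congrFun₂ <| hL.ext_of_levels₂
      ((hL.continuous_liftFun f hf).comp (continuous_fst.add continuous_snd))
      (((hL.continuous_liftFun f hf).comp continuous_fst).add
        ((hL.continuous_liftFun f hf).comp continuous_snd)) fun n a b => by
    simp only [← map_add, hL.liftFun_apply f hf]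
  map_mul' := congrFun₂ <| hL.ext_of_levels₂
      ((hL.continuous_liftFun f hf).comp (continuous_fst.mul continuous_snd))
      (((hL.continuous_liftFun f hf).comp continuous_fst).mul
        ((hL.continuous_liftFun f hf).comp continuous_snd)) fun n a b => by
    simp only [← map_mul, hL.liftFun_apply f hf]
  map_star' := congrFun <| hL.ext_of_levels ((hL.continuous_liftFun f hf).comp continuous_star)
      (hL.continuous_liftFun f hf).star fun n a => by
    simp only [← map_star, hL.liftFun_apply f hf]

@[simp]
lemma lift_apply (n : ℕ) (a : A n) : hL.lift f hf (ι n a) = f n a :=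
  hL.liftFun_apply f hf n a

lemma lift_comp (n : ℕ) : (hL.lift f hf).comp (ι n) = f n :=
  NonUnitalStarAlgHom.ext (hL.lift_apply f hf n)

lemma dag_lift_dag (n : ℕ) (x : Unitization ℂ (A n)) :
    (hL.lift f hf).dag ((ι n).dag x) = (f n).dag x := by
  rw [starMap_starMap, hL.lift_comp]

lemma hom_ext {F F' : L →⋆ₙₐ[ℂ] B} (h : ∀ n a, F (ι n a) = F' (ι n a)) : F = F' :=
  DFunLike.coe_injective <| hL.ext_of_levels (map_continuous F) (map_continuous F') h

lemma continuous_apply_of_levels {X : Type*} [TopologicalSpace X] (F : X → L →⋆ₙₐ[ℂ] B)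
    (hF : ∀ n a, Continuous fun x => F x (ι n a)) (y : L) : Continuous fun x => F x y := by
  refine continuous_iff_continuousAt.mpr fun x₀ => ?_
  have hequi : Equicontinuous fun x => ⇑(F x) :=
    (LipschitzWith.uniformEquicontinuous _ 1 fun x =>
      AddMonoidHomClass.lipschitz_of_bound_nnnorm (F x) 1 fun y => by
        simpa using NonUnitalStarAlgHom.nnnorm_apply_le (F x) y).equicontinuous
  have hclosed := hequi.isClosed_setOfPred_tendsto (l := 𝓝 x₀) (map_continuous (F x₀))
  refine hclosed.closure_subset_iff.mpr ?_ (hL.dense y)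
  rintro _ hy
  obtain ⟨n, a, rfl⟩ := Set.mem_iUnion.mp hy
  exact (hF n a).continuousAt

variable (ρ : ∀ n, A n ≃⋆ₐ[ℂ] A n) (hρ : ∀ n a, ρ (n + 1) (p n a) = p n (ρ n a))

include hρ in
lemma compat_comp_aut : ∀ n, (ι n).comp (ρ n : A n →⋆ₙₐ[ℂ] A n)
    = ((ι (n + 1)).comp (ρ (n + 1) : A (n + 1) →⋆ₙₐ[ℂ] A (n + 1))).comp (p n) := by
  intro n
  ext a
  change ι n (ρ n a) = ι (n + 1) (ρ (n + 1) (p n a))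
  rw [hρ, hL.compat n]
  rfl

include hρ in
lemma compat_comp_aut_symm : ∀ n, (ι n).comp ((ρ n).symm : A n →⋆ₙₐ[ℂ] A n)
    = ((ι (n + 1)).comp ((ρ (n + 1)).symm : A (n + 1) →⋆ₙₐ[ℂ] A (n + 1))).comp (p n) :=
  hL.compat_comp_aut (fun n => (ρ n).symm) fun n a => by
    rw [StarAlgEquiv.symm_apply_eq, hρ, StarAlgEquiv.apply_symm_apply]

noncomputable def liftAut : L ≃⋆ₐ[ℂ] L :=
  let F := hL.lift _ (hL.compat_comp_aut ρ hρ)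
  let F' := hL.lift _ (hL.compat_comp_aut_symm ρ hρ)
  { F with
    invFun := F'
    left_inv := DFunLike.congr_fun <| hL.hom_ext (F := F'.comp F)
      (F' := NonUnitalStarAlgHom.id ℂ L) fun n a => by simp [F, F']
    right_inv := DFunLike.congr_fun <| hL.hom_ext (F := F.comp F')
      (F' := NonUnitalStarAlgHom.id ℂ L) fun n a => by simp [F, F'] }

@[simp]
lemma liftAut_apply (n : ℕ) (a : A n) : hL.liftAut ρ hρ (ι n a) = ι n (ρ n a) :=
  hL.lift_apply _ (hL.compat_comp_aut ρ hρ) n a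

end IsCStarInductiveLimit

section Perturbation

variable {G : Type*} [Group G] [TopologicalSpace G] {A B : Type*} [NonUnitalCStarAlgebra A]
  [NonUnitalCStarAlgebra B]

namespace GentlyTwistedAction

lemma dag_one (S : GentlyTwistedAction G A) (x : Unitization ℂ A) : (S.α 1).dag x = x := by
  have : ((S.α 1 : A ≃⋆ₐ[ℂ] A) : A →⋆ₙₐ[ℂ] A) = NonUnitalStarAlgHom.id ℂ A :=
    NonUnitalStarAlgHom.ext S.α_one
  rw [StarAlgEquiv.dag, this, starMap_id]
  rfl

variable (S : GentlyTwistedAction G A) {U : G → Unitization ℂ A}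
  (hU : ∀ g, U g ∈ unitary (Unitization ℂ A))

noncomputable def perturbAut (g : G) : A ≃⋆ₐ[ℂ] A :=
  (S.α g).trans (conjAut ⟨U g, hU g⟩)

def perturbCocycle (U : G → Unitization ℂ A) (s t : G) : Unitization ℂ A :=
  U s * (S.α s).dag (U t) * S.u s t * star (U (s * t))

lemma inr_perturbAut (g : G) (a : A) :
    (S.perturbAut hU g a : Unitization ℂ A) = U g * S.α g a * star (U g) :=
  inr_conjAut _ _

lemma starMap_perturbAut (g : G) (x : Unitization ℂ A) :
    (S.perturbAut hU g).dag x = U g * (S.α g).dag x * star (U g) :=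
  starMap_eq_conj (hU g) (S.inr_perturbAut hU g) x

lemma inr_α_eq_dag (g : G) (a : A) : (S.α g a : Unitization ℂ A) = (S.α g).dag a :=
  (starMap_inr (S.α g : A →⋆ₙₐ[ℂ] A) a).symm

lemma inr_perturbAut_perturbAut (s t : G) (a : A) :
    (S.perturbAut hU s (S.perturbAut hU t a) : Unitization ℂ A)
      = S.perturbCocycle U s t * S.perturbAut hU (s * t) a * star (S.perturbCocycle U s t) := by
  rw [S.inr_perturbAut, S.inr_α_eq_dag, S.inr_perturbAut, map_mul, map_mul, map_star,
    ← S.inr_α_eq_dag, S.α_mul, S.inr_perturbAut, perturbCocycle]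
  simp only [star_mul, star_star, mul_assoc, Unitary.star_mul_cancel_left_of_mem (hU (s * t))]

lemma perturbAut_one (hU_one : U 1 = 1) (a : A) : S.perturbAut hU 1 a = a :=
  inr_injective (R := ℂ) <| by rw [S.inr_perturbAut, hU_one, S.α_one, star_one, one_mul, mul_one]

lemma continuous_perturbAut_apply (hU_cont : Continuous U) (a : A) :
    Continuous fun g => S.perturbAut hU g a := by
  refine (isometry_inr (𝕜 := ℂ)).isEmbedding.continuous_iff.mpr ?_
  simp only [Function.comp_def, S.inr_perturbAut]
  exact (hU_cont.mul (continuous_inr.comp (S.α_cont a))).mul hU_cont.star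

end GentlyTwistedAction

namespace ProperCocycleMorphism

variable {Sa : GentlyTwistedAction G A} {Sb : GentlyTwistedAction G B}
  (P : ProperCocycleMorphism Sa Sb)

lemma u_one : P.u 1 = 1 := by
  have h := P.cocycle 1 1
  rw [Sa.u_one_left, Sb.u_one_left, map_one, Sb.dag_one, mul_one, one_mul, mul_assoc,
    Unitary.mul_star_self_of_mem (P.u_mem 1).1, mul_one] at h
  exact h.symm

lemma inr_α_φ (g : G) (a : A) :
    (Sb.α g (P.φ a) : Unitization ℂ B) = star (P.u g) * P.φ (Sa.α g a) * P.u g := by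
  have hu := (P.u_mem g).1
  rw [← P.equivariance g a]
  simp only [mul_assoc, Unitary.star_mul_cancel_left_of_mem hu,
    Unitary.star_mul_self_of_mem hu, mul_one]

lemma dag_α_dag_φ (g : G) (x : Unitization ℂ A) :
    (Sb.α g).dag (P.φ.dag x) = star (P.u g) * P.φ.dag ((Sa.α g).dag x) * P.u g := by
  rw [starMap_starMap, starMap_starMap]
  have h := starMap_eq_conj (ψ := (Sb.α g : B →⋆ₙₐ[ℂ] B).comp P.φ)
    (φ := P.φ.comp (Sa.α g : A →⋆ₙₐ[ℂ] A)) (Unitary.star_mem (P.u_mem g).1)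
    (fun a => by rw [star_star]; exact P.inr_α_φ g a) x
  rwa [star_star] at h

variable {U : G → Unitization ℂ A} {U' : G → Unitization ℂ B}
  (hU : ∀ g, U g ∈ unitary (Unitization ℂ A)) (hU' : ∀ g, U' g ∈ unitary (Unitization ℂ B))
  (hUU' : ∀ g, U' g = P.φ.dag (U g) * P.u g)
include hUU'

lemma perturbAut_map (g : G) (a : A) :
    Sb.perturbAut hU' g (P.φ a) = P.φ (Sa.perturbAut hU g a) := by
  refine inr_injective (R := ℂ) ?_
  rw [Sb.inr_perturbAut, P.inr_α_φ, ← starMap_inr P.φ (Sa.perturbAut hU g a),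
    Sa.inr_perturbAut, map_mul, map_mul, map_star, starMap_inr, hUU']
  simp only [star_mul, mul_assoc, Unitary.mul_star_cancel_left_of_mem (P.u_mem g).1]

lemma dag_perturbCocycle (s t : G) :
    P.φ.dag (Sa.perturbCocycle U s t) = Sb.perturbCocycle U' s t := by
  rw [GentlyTwistedAction.perturbCocycle, GentlyTwistedAction.perturbCocycle, hUU', hUU', hUU',
    map_mul, map_mul, map_mul, map_star, P.cocycle, map_mul (Sb.α s).dag, P.dag_α_dag_φ]
  simp only [star_mul, mul_assoc, Unitary.mul_star_cancel_left_of_mem (P.u_mem s).1]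

end ProperCocycleMorphism

end Perturbation

section InductiveSystem

variable {G : Type*} [Group G] [TopologicalSpace G] {A : ℕ → Type*}
  [∀ n, NonUnitalCStarAlgebra (A n)] {S : ∀ n, GentlyTwistedAction G (A n)}
  {P : ∀ n, ProperCocycleMorphism (S n) (S (n + 1))} {U : ∀ n, G → Unitization ℂ (A n)}
  (hU_zero : ∀ g, U 0 g = 1) (hU_succ : ∀ n g, U (n + 1) g = (P n).φ.dag (U n g) * (P n).u g)
include hU_zero hU_succ

lemma isU1_of_recursion (n : ℕ) (g : G) : IsU1 (U n g) := by
  induction n with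
  | zero => rw [hU_zero]; exact IsU1.one
  | succ n ih => rw [hU_succ]; exact (ih.starMap _).mul ((P n).u_mem g)

lemma continuous_of_recursion (n : ℕ) : Continuous (U n) := by
  induction n with
  | zero => rw [funext hU_zero]; exact continuous_const
  | succ n ih =>
    rw [funext (hU_succ n)]
    exact ((map_continuous (P n).φ.dag).comp ih).mul (P n).u_cont

lemma map_one_of_recursion (n : ℕ) : U n 1 = 1 := by
  induction n with
  | zero => exact hU_zero 1
  | succ n ih => rw [hU_succ, ih, map_one, (P n).u_one, mul_one]

lemma dag_perturbCocycle_of_compat {B : Type*} [NonUnitalCStarAlgebra B]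
    {f : ∀ n, A n →⋆ₙₐ[ℂ] B} (hf : ∀ n, f n = (f (n + 1)).comp (P n).φ) (n : ℕ) (s t : G) :
    (f n).dag ((S n).perturbCocycle (U n) s t) = (f 0).dag ((S 0).u s t) := by
  induction n with
  | zero =>
    simp only [GentlyTwistedAction.perturbCocycle, hU_zero, map_one, star_one, one_mul, mul_one]
  | succ n ih =>
    rw [← ih, hf n, ← starMap_starMap, (P n).dag_perturbCocycle (hU_succ n)]

lemma u_eq_of_compat {B : Type*} [NonUnitalCStarAlgebra B] {Sb : GentlyTwistedAction G B}
    {θ : ∀ n, ProperCocycleMorphism (S n) Sb} (hθφ : ∀ n, (θ n).φ = (θ (n + 1)).φ.comp (P n).φ)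
    (hθu : ∀ n g, (θ n).u g = (θ (n + 1)).φ.dag ((P n).u g) * (θ (n + 1)).u g) (n : ℕ) (g : G) :
    (θ 0).u g = (θ n).φ.dag (U n g) * (θ n).u g := by
  induction n with
  | zero => rw [hU_zero, map_one, one_mul]
  | succ n ih => rw [ih, hθu, hθφ, ← starMap_starMap, hU_succ, map_mul, mul_assoc]

end InductiveSystem

section Limit

variable {G : Type*} [Group G] [TopologicalSpace G] {A : ℕ → Type*}
  [∀ n, NonUnitalCStarAlgebra (A n)] {S : ∀ n, GentlyTwistedAction G (A n)}
  {P : ∀ n, ProperCocycleMorphism (S n) (S (n + 1))} {U : ∀ n, G → Unitization ℂ (A n)}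
  (hU_zero : ∀ g, U 0 g = 1) (hU_succ : ∀ n g, U (n + 1) g = (P n).φ.dag (U n g) * (P n).u g)
  {Alim : Type*} [NonUnitalCStarAlgebra Alim] {chain : ∀ n m, A n →⋆ₙₐ[ℂ] A m}
  {φlim : ∀ n, A n →⋆ₙₐ[ℂ] Alim} (hL : IsCStarInductiveLimit (fun n => (P n).φ) chain φlim)
include hU_zero hU_succ hL

noncomputable def limitAut (g : G) : Alim ≃⋆ₐ[ℂ] Alim :=
  hL.liftAut (fun n => (S n).perturbAut (fun g => (isU1_of_recursion hU_zero hU_succ n g).1) g)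
    fun n a => (P n).perturbAut_map _ _ (hU_succ n) g a

lemma limitAut_apply (n : ℕ) (g : G) (a : A n) :
    limitAut hU_zero hU_succ hL g (φlim n a)
      = φlim n ((S n).perturbAut (fun g => (isU1_of_recursion hU_zero hU_succ n g).1) g a) :=
  hL.liftAut_apply _ _ n a

lemma inr_limitAut_apply (n : ℕ) (g : G) (a : A n) :
    (limitAut hU_zero hU_succ hL g (φlim n a) : Unitization ℂ Alim)
      = (φlim n).dag (U n g * (S n).α g a * star (U n g)) := by
  rw [limitAut_apply, ← starMap_inr, GentlyTwistedAction.inr_perturbAut]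

lemma dag_limitAut_dag (n : ℕ) (g : G) (x : Unitization ℂ (A n)) :
    (limitAut hU_zero hU_succ hL g).dag ((φlim n).dag x)
      = (φlim n).dag (U n g * ((S n).α g).dag x * star (U n g)) := by
  have hcomp : ((limitAut hU_zero hU_succ hL g : Alim ≃⋆ₐ[ℂ] Alim) : Alim →⋆ₙₐ[ℂ] Alim).comp
      (φlim n) = (φlim n).comp ((S n).perturbAut
        (fun g => (isU1_of_recursion hU_zero hU_succ n g).1) g : A n →⋆ₙₐ[ℂ] A n) :=
    NonUnitalStarAlgHom.ext (limitAut_apply hU_zero hU_succ hL n g)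
  rw [StarAlgEquiv.dag, starMap_starMap, hcomp, ← starMap_starMap,
    GentlyTwistedAction.starMap_perturbAut]

lemma continuous_limitAut_apply (x : Alim) :
    Continuous fun g => limitAut hU_zero hU_succ hL g x :=
  hL.continuous_apply_of_levels (fun g => (limitAut hU_zero hU_succ hL g : Alim →⋆ₙₐ[ℂ] Alim))
    (fun n a => by
      simp only [NonUnitalStarAlgHom.coe_coe, limitAut_apply]
      exact (map_continuous (φlim n)).comp ((S n).continuous_perturbAut_apply _
        (continuous_of_recursion hU_zero hU_succ n) a)) x

lemma limitAut_one (x : Alim) : limitAut hU_zero hU_succ hL 1 x = x := by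
  refine congrFun (hL.ext_of_levels (F' := id) (map_continuous _) continuous_id fun n a => ?_) x
  rw [limitAut_apply, (S n).perturbAut_one _ (map_one_of_recursion hU_zero hU_succ n), id]

lemma inr_limitAut_limitAut (s t : G) (x : Alim) :
    (limitAut hU_zero hU_succ hL s (limitAut hU_zero hU_succ hL t x) : Unitization ℂ Alim)
      = (φlim 0).dag ((S 0).u s t) * limitAut hU_zero hU_succ hL (s * t) x
        * star ((φlim 0).dag ((S 0).u s t)) := by
  set T := limitAut hU_zero hU_succ hL
  set W := (φlim 0).dag ((S 0).u s t)
  refine congrFun (hL.ext_of_levels (F := fun x => ((T s (T t x) : Alim) : Unitization ℂ Alim))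
    (F' := fun x => W * T (s * t) x * star W)
    (Unitization.continuous_inr.comp ((map_continuous _).comp (map_continuous _)))
    ((continuous_const.mul (Unitization.continuous_inr.comp (map_continuous _))).mul
      continuous_const) fun n a => ?_) x
  simp only [T, W, limitAut_apply]
  rw [← starMap_inr, ← starMap_inr, (S n).inr_perturbAut_perturbAut,
    ← dag_perturbCocycle_of_compat hU_zero hU_succ hL.compat n, map_mul, map_mul, map_star]

noncomputable def limitAction : GentlyTwistedAction G Alim where
  α := limitAut hU_zero hU_succ hL
  α_cont := continuous_limitAut_apply hU_zero hU_succ hL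
  u s t := (φlim 0).dag ((S 0).u s t)
  u_mem s t := ((S 0).u_mem s t).starMap _
  u_cont := (map_continuous _).comp (S 0).u_cont
  α_one := limitAut_one hU_zero hU_succ hL
  α_mul := inr_limitAut_limitAut hU_zero hU_succ hL
  u_one_left s := by rw [(S 0).u_one_left, map_one]
  u_one_right s := by rw [(S 0).u_one_right, map_one]
  u_cocycle r s t := by
    rw [dag_limitAut_dag, hU_zero, star_one, one_mul, mul_one, ← map_mul, ← map_mul,
      (S 0).u_cocycle]

lemma limitAut_unique {β : G → Alim ≃⋆ₐ[ℂ] Alim}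
    (hβ : ∀ n g (a : A n), (β g (φlim n a) : Unitization ℂ Alim)
      = (φlim n).dag (U n g * (S n).α g a * star (U n g))) :
    β = limitAut hU_zero hU_succ hL := by
  funext g
  refine StarAlgEquiv.ext fun x => DFunLike.congr_fun (hL.hom_ext
    (F := (β g : Alim →⋆ₙₐ[ℂ] Alim)) (F' := (limitAut hU_zero hU_succ hL g : Alim →⋆ₙₐ[ℂ] Alim))
    fun n a => inr_injective (R := ℂ) ?_) x
  simp only [NonUnitalStarAlgHom.coe_coe]
  rw [hβ, inr_limitAut_apply]

noncomputable def limitMorphism (n : ℕ) :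
    ProperCocycleMorphism (S n) (limitAction hU_zero hU_succ hL) where
  φ := φlim n
  u g := star ((φlim n).dag (U n g))
  u_mem g := ((isU1_of_recursion hU_zero hU_succ n g).starMap _).star
  u_cont := ((map_continuous _).comp (continuous_of_recursion hU_zero hU_succ n)).star
  equivariance g a := by
    have hU := Unitary.map_mem (φlim n).dag (isU1_of_recursion hU_zero hU_succ n g).1
    change _ * ((limitAut hU_zero hU_succ hL g (φlim n a) : Alim) : Unitization ℂ Alim) * _ = _
    rw [star_star, inr_limitAut_apply, map_mul, map_mul, map_star, starMap_inr]
    simp only [mul_assoc, Unitary.star_mul_cancel_left_of_mem hU,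
      Unitary.star_mul_self_of_mem hU, mul_one]
  cocycle g h := by
    have hUg := (isU1_of_recursion hU_zero hU_succ n g).1
    have hα := Unitary.map_mem ((S n).α g).dag (isU1_of_recursion hU_zero hU_succ n h).1
    change _ = _ * (limitAut hU_zero hU_succ hL g).dag _ * (φlim 0).dag ((S 0).u g h) * _
    rw [star_star, ← map_star, ← map_star (φlim n).dag (U n h), dag_limitAut_dag,
      ← dag_perturbCocycle_of_compat hU_zero hU_succ hL.compat n,
      GentlyTwistedAction.perturbCocycle,
      ← map_mul, ← map_mul, ← map_mul]
    congr 1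
    simp only [map_star, mul_assoc, Unitary.star_mul_cancel_left_of_mem hUg,
      Unitary.star_mul_cancel_left_of_mem hα,
      Unitary.star_mul_self_of_mem (isU1_of_recursion hU_zero hU_succ n (g * h)).1, mul_one]

lemma limitMorphism_u_succ (n : ℕ) (g : G) :
    (limitMorphism hU_zero hU_succ hL n).u g
      = (φlim (n + 1)).dag ((P n).u g) * (limitMorphism hU_zero hU_succ hL (n + 1)).u g := by
  change star _ = _ * star _
  rw [hU_succ, map_mul, star_mul, ← Unitary.mul_star_cancel_left_of_mem
    (Unitary.map_mem (φlim (n + 1)).dag ((P n).u_mem g).1) (star _), starMap_starMap,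
    ← hL.compat n]

variable {B : Type*} [NonUnitalCStarAlgebra B] {Sb : GentlyTwistedAction G B}
  {θ : ∀ n, ProperCocycleMorphism (S n) Sb} (hθφ : ∀ n, (θ n).φ = (θ (n + 1)).φ.comp (P n).φ)
  (hθu : ∀ n g, (θ n).u g = (θ (n + 1)).φ.dag ((P n).u g) * (θ (n + 1)).u g)
include hθφ hθu

noncomputable def limitLift : ProperCocycleMorphism (limitAction hU_zero hU_succ hL) Sb where
  φ := hL.lift (fun n => (θ n).φ) hθφ
  u := (θ 0).u
  u_mem := (θ 0).u_mem
  u_cont := (θ 0).u_cont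
  equivariance g := congrFun <| hL.ext_of_levels
    ((continuous_const.mul (Unitization.continuous_inr.comp ((map_continuous _).comp
      (map_continuous _)))).mul continuous_const)
    (Unitization.continuous_inr.comp ((map_continuous _).comp (map_continuous _))) fun n a => by
      change _ = (((hL.lift _ hθφ) (limitAut hU_zero hU_succ hL g (φlim n a)) : B) :
        Unitization ℂ B)
      rw [hL.lift_apply, ← starMap_inr, inr_limitAut_apply, hL.dag_lift_dag,
        u_eq_of_compat hU_zero hU_succ hθφ hθu n g, map_mul, map_mul, map_star,
        starMap_inr, ← (θ n).equivariance]
      simp only [star_mul, mul_assoc]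
  cocycle g h := by
    change (hL.lift _ hθφ).dag ((φlim 0).dag _) = _
    rw [hL.dag_lift_dag, (θ 0).cocycle]

lemma limitLift_comp (n : ℕ) :
    (limitLift hU_zero hU_succ hL hθφ hθu).φ.comp (φlim n) = (θ n).φ :=
  hL.lift_comp _ hθφ n

lemma limitLift_u_comp (n : ℕ) (g : G) :
    (limitLift hU_zero hU_succ hL hθφ hθu).φ.dag (star ((φlim n).dag (U n g)))
      * (limitLift hU_zero hU_succ hL hθφ hθu).u g = (θ n).u g := by
  change (hL.lift _ hθφ).dag _ * (θ 0).u g = _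
  rw [map_star, hL.dag_lift_dag, u_eq_of_compat hU_zero hU_succ hθφ hθu n g,
    Unitary.star_mul_cancel_left_of_mem
      (Unitary.map_mem _ (isU1_of_recursion hU_zero hU_succ n g).1)]

lemma limitLift_unique (ΘV : ProperCocycleMorphism (limitAction hU_zero hU_succ hL) Sb)
    (h : ∀ n, ΘV.φ.comp (φlim n) = (θ n).φ ∧
      ∀ g, ΘV.φ.dag (star ((φlim n).dag (U n g))) * ΘV.u g = (θ n).u g) :
    ΘV.φ = (limitLift hU_zero hU_succ hL hθφ hθu).φ ∧
      ΘV.u = (limitLift hU_zero hU_succ hL hθφ hθu).u := by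
  refine ⟨hL.hom_ext fun n a => ?_, funext fun g => ?_⟩
  · rw [← NonUnitalStarAlgHom.comp_apply, (h n).1, ← NonUnitalStarAlgHom.comp_apply,
      limitLift_comp]
  · have h0 := (h 0).2 g
    rwa [hU_zero, map_one, star_one, map_one, one_mul] at h0

end Limit

universe u v w uB

theorem gentlyTwisted_inductiveLimit_general
    {G : Type u} [Group G] [TopologicalSpace G]
    {A : ℕ → Type v} [∀ n, NonUnitalCStarAlgebra (A n)]
    (S : ∀ n, GentlyTwistedAction G (A n))
    (P : ∀ n, ProperCocycleMorphism (S n) (S (n + 1)))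
    {Alim : Type w} [NonUnitalCStarAlgebra Alim]
    (φlim : ∀ n, A n →⋆ₙₐ[ℂ] Alim)
    -- the iterated connecting maps `φ_{n,m}` :
    (chain : ∀ n m : ℕ, A n →⋆ₙₐ[ℂ] A m)
    (hchain_refl : ∀ n, chain n n = NonUnitalStarAlgHom.id ℂ (A n))
    (hchain_succ : ∀ n m, n ≤ m → chain n (m + 1) = (P m).φ.comp (chain n m))
    -- `(Alim, (φ_{n,∞})_n)` realizes the C*-inductive limit :
    (hcompat : ∀ n, φlim n = (φlim (n + 1)).comp (P n).φ)
    (hdense : Dense (⋃ n, Set.range (φlim n)))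
    (hnorm : ∀ n (a : A n),
      Filter.Tendsto (fun m => ‖chain n m a‖) Filter.atTop (nhds ‖φlim n a‖))
    -- the inductively defined unitaries `𝕌⁽ⁿ⁾` :
    (U : ∀ n, G → Unitization ℂ (A n))
    (hU_zero : ∀ g, U 0 g = 1)
    (hU_succ : ∀ n g, U (n + 1) g = (P n).φ.dag (U n g) * (P n).u g) :
    ∃ T : GentlyTwistedAction G Alim,
      -- (1) the characterizing properties of the limit action ...
      (∀ n (g : G) (a : A n),
        ((T.α g (φlim n a) : Alim) : Unitization ℂ Alim)
          = (φlim n).dag (U n g * (((S n).α g a : A n) : Unitization ℂ (A n)) * star (U n g))) ∧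
      (∀ g h : G, T.u g h = (φlim 0).dag ((S 0).u g h)) ∧
      -- ... and their uniqueness :
      (∀ T' : GentlyTwistedAction G Alim,
        (∀ n (g : G) (a : A n),
          ((T'.α g (φlim n a) : Alim) : Unitization ℂ Alim)
            = (φlim n).dag (U n g * (((S n).α g a : A n) : Unitization ℂ (A n))
                * star (U n g))) →
        (∀ g h : G, T'.u g h = (φlim 0).dag ((S 0).u g h)) →
        T'.α = T.α ∧ T'.u = T.u) ∧
      -- (2) the universal morphisms `(φ,u)_{n,∞}` are proper cocycle morphisms ...
      (∀ n, ∃ Q : ProperCocycleMorphism (S n) T,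
        Q.φ = φlim n ∧ ∀ g : G, Q.u g = star ((φlim n).dag (U n g))) ∧
      -- ... satisfying `(φ,u)_{n,∞} = (φ,u)_{n+1,∞} ∘ (φ_n, u⁽ⁿ⁾)` :
      (∀ n (g : G),
        star ((φlim n).dag (U n g))
          = (φlim (n + 1)).dag ((P n).u g) * star ((φlim (n + 1)).dag (U (n + 1) g))) ∧
      -- (3) the universal property :
      (∀ (B : Type uB) [NonUnitalCStarAlgebra B], ∀ (Sb : GentlyTwistedAction G B)
        (θ : ∀ n, ProperCocycleMorphism (S n) Sb),
        (∀ n, (θ n).φ = (θ (n + 1)).φ.comp (P n).φ) →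
        (∀ n (g : G), (θ n).u g = (θ (n + 1)).φ.dag ((P n).u g) * (θ (n + 1)).u g) →
        ∃ ΘV : ProperCocycleMorphism T Sb,
          (∀ n, ΘV.φ.comp (φlim n) = (θ n).φ ∧
            ∀ g : G, ΘV.φ.dag (star ((φlim n).dag (U n g))) * ΘV.u g = (θ n).u g) ∧
          (∀ ΘV' : ProperCocycleMorphism T Sb,
            (∀ n, ΘV'.φ.comp (φlim n) = (θ n).φ ∧
              ∀ g : G, ΘV'.φ.dag (star ((φlim n).dag (U n g))) * ΘV'.u g = (θ n).u g) →
            ΘV'.φ = ΘV.φ ∧ ΘV'.u = ΘV.u)) := by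
  have hL : IsCStarInductiveLimit (fun n => (P n).φ) chain φlim :=
    ⟨hchain_refl, hchain_succ, hcompat, hdense, hnorm⟩
  refine ⟨limitAction hU_zero hU_succ hL, inr_limitAut_apply hU_zero hU_succ hL,
    fun g h => rfl,
    fun T' hα hu => ⟨limitAut_unique hU_zero hU_succ hL hα, funext fun g => funext (hu g)⟩,
    fun n => ⟨limitMorphism hU_zero hU_succ hL n, rfl, fun g => rfl⟩,
    limitMorphism_u_succ hU_zero hU_succ hL, ?_⟩
  intro B _ Sb θ hθφ hθu
  exact ⟨limitLift hU_zero hU_succ hL hθφ hθu,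
    fun n => ⟨limitLift_comp hU_zero hU_succ hL hθφ hθu n,
      limitLift_u_comp hU_zero hU_succ hL hθφ hθu n⟩,
    limitLift_unique hU_zero hU_succ hL hθφ hθu⟩

/-- Sequential inductive limits exist in the proper cocycle category.
Given an inductive system of proper cocycle morphisms `(φ_n, u⁽ⁿ⁾)` between gently twisted
`G`-C*-algebras `(A_n, α⁽ⁿ⁾, 𝔲⁽ⁿ⁾)`, and a realization `(Alim, (φ_{n,∞})_n)` of the underlying
C*-inductive limit (with iterated connecting maps `chain` and the inductively defined
unitaries `𝕌⁽ⁿ⁾`), then: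
(1) there is a unique gently twisted action `(α, 𝔲) : G ↷ Alim` with
`α_g ∘ φ_{n,∞} = φ_{n,∞} ∘ Ad(𝕌⁽ⁿ⁾_g) ∘ α⁽ⁿ⁾_g` and `𝔲 = φ_{0,∞}† ∘ 𝔲⁽⁰⁾`;
(2) the pairs `(φ_{n,∞}, g ↦ φ_{n,∞}†(𝕌⁽ⁿ⁾_g)*)` are proper cocycle morphisms into the limit
and are compatible with the connecting maps;
(3) `(Alim, α, 𝔲)` with these morphisms satisfies the universal property of the inductive limit
in the proper cocycle category. -/
theorem gentlyTwisted_inductiveLimit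
    {G : Type u} [Group G] [TopologicalSpace G] [IsTopologicalGroup G]
    [LocallyCompactSpace G] [SecondCountableTopology G] [T2Space G]
    {A : ℕ → Type v} [∀ n, NonUnitalCStarAlgebra (A n)]
    (S : ∀ n, GentlyTwistedAction G (A n))
    (P : ∀ n, ProperCocycleMorphism (S n) (S (n + 1)))
    {Alim : Type w} [NonUnitalCStarAlgebra Alim]
    (φlim : ∀ n, A n →⋆ₙₐ[ℂ] Alim)
    -- the iterated connecting maps `φ_{n,m}` :
    (chain : ∀ n m : ℕ, A n →⋆ₙₐ[ℂ] A m)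
    (hchain_refl : ∀ n, chain n n = NonUnitalStarAlgHom.id ℂ (A n))
    (hchain_succ : ∀ n m, n ≤ m → chain n (m + 1) = (P m).φ.comp (chain n m))
    -- `(Alim, (φ_{n,∞})_n)` realizes the C*-inductive limit :
    (hcompat : ∀ n, φlim n = (φlim (n + 1)).comp (P n).φ)
    (hdense : Dense (⋃ n, Set.range (φlim n)))
    (hnorm : ∀ n (a : A n),
      Filter.Tendsto (fun m => ‖chain n m a‖) Filter.atTop (nhds ‖φlim n a‖))
    -- the inductively defined unitaries `𝕌⁽ⁿ⁾` :
    (U : ∀ n, G → Unitization ℂ (A n))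
    (hU_zero : ∀ g, U 0 g = 1)
    (hU_succ : ∀ n g, U (n + 1) g = (P n).φ.dag (U n g) * (P n).u g) :
    ∃ T : GentlyTwistedAction G Alim,
      -- (1) the characterizing properties of the limit action ...
      (∀ n (g : G) (a : A n),
        ((T.α g (φlim n a) : Alim) : Unitization ℂ Alim)
          = (φlim n).dag (U n g * (((S n).α g a : A n) : Unitization ℂ (A n)) * star (U n g))) ∧
      (∀ g h : G, T.u g h = (φlim 0).dag ((S 0).u g h)) ∧
      -- ... and their uniqueness :
      (∀ T' : GentlyTwistedAction G Alim,
        (∀ n (g : G) (a : A n),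
          ((T'.α g (φlim n a) : Alim) : Unitization ℂ Alim)
            = (φlim n).dag (U n g * (((S n).α g a : A n) : Unitization ℂ (A n))
                * star (U n g))) →
        (∀ g h : G, T'.u g h = (φlim 0).dag ((S 0).u g h)) →
        T'.α = T.α ∧ T'.u = T.u) ∧
      -- (2) the universal morphisms `(φ,u)_{n,∞}` are proper cocycle morphisms ...
      (∀ n, ∃ Q : ProperCocycleMorphism (S n) T,
        Q.φ = φlim n ∧ ∀ g : G, Q.u g = star ((φlim n).dag (U n g))) ∧
      -- ... satisfying `(φ,u)_{n,∞} = (φ,u)_{n+1,∞} ∘ (φ_n, u⁽ⁿ⁾)` :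
      (∀ n (g : G),
        star ((φlim n).dag (U n g))
          = (φlim (n + 1)).dag ((P n).u g) * star ((φlim (n + 1)).dag (U (n + 1) g))) ∧
      -- (3) the universal property :
      (∀ (B : Type uB) [NonUnitalCStarAlgebra B], ∀ (Sb : GentlyTwistedAction G B)
        (θ : ∀ n, ProperCocycleMorphism (S n) Sb),
        (∀ n, (θ n).φ = (θ (n + 1)).φ.comp (P n).φ) →
        (∀ n (g : G), (θ n).u g = (θ (n + 1)).φ.dag ((P n).u g) * (θ (n + 1)).u g) →
        ∃ ΘV : ProperCocycleMorphism T Sb,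
          (∀ n, ΘV.φ.comp (φlim n) = (θ n).φ ∧
            ∀ g : G, ΘV.φ.dag (star ((φlim n).dag (U n g))) * ΘV.u g = (θ n).u g) ∧
          (∀ ΘV' : ProperCocycleMorphism T Sb,
            (∀ n, ΘV'.φ.comp (φlim n) = (θ n).φ ∧
              ∀ g : G, ΘV'.φ.dag (star ((φlim n).dag (U n g))) * ΘV'.u g = (θ n).u g) →
            ΘV'.φ = ΘV.φ ∧ ΘV'.u = ΘV.u)) :=
  gentlyTwisted_inductiveLimit_general S P φlim chain hchain_refl hchain_succ hcompat hdense hnorm U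
    hU_zero hU_succ
end

section
/- Let G be a second-countable locally compact Hausdorff group and let (α,𝔲): G ↷ A and (β,𝔳): G ↷ B be twisted actions on separable unital C*-algebras. Let (φ,u): (A,α,𝔲) → (B,β,𝔳) be a cocycle morphism with φ injective and unital. Then (φ,u) is asymptotically unitarily equivalent to a cocycle conjugacy if and only if the following holds: for all finite sets F_A ⊆ A and F_B ⊆ B, every compact set K ⊆ G and every ε > 0, there exists a norm-continuous path of unitaries z : [0,1] → U(B) with z_0 = 1 such that (a) max_{0≤t≤1} ‖z_t·φ(a) − φ(a)·z_t‖ ≤ ε for all a ∈ F_A; (b) dist(z_1*·b·z_1, φ(A)) ≤ ε for all b ∈ F_B; and (c) max_{g∈K} max_{0≤t≤1} ‖u_g − z_t·u_g·β_g(z_t)*‖ ≤ ε. -/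
/-!
Conjugating a cocycle morphism `(φ, u)` by a unitary `w` gives the cocycle morphism
`(Ad w ∘ φ, g ↦ w u_g β_g(w)*)`, and pointwise limits of cocycle morphisms are again cocycle
morphisms, so both directions are statements about the family `Ad w_t ∘ (φ, u)`.

(⇒) If `Ad w_t ∘ (φ, u)` converges to a cocycle conjugacy `Θ`, take `s ≤ r` late and
`z_t = w_s* w_{s + t(r - s)}`: conjugating by `w_s` shows that `z_t` moves `(φ, u)` only as much
as the conjugates move after time `s`, and `z_1* b z_1` is close to `φ(c)` where
`Θ(c) = w_s b w_s*`.

(⇐) Elliott's intertwining argument. Apply the condition with tolerance `2^-(n+1)` on growing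
finite sets exhausting dense sequences of `A` and `B` and on a compact exhaustion of `G`, and
concatenate the paths to `W_t = V_n z_n(t - n)` with `V_{n+1} = V_n z_n(1)`. Then
`Ad W_t ∘ (φ, u)` converges at geometric speed, uniformly on compact subsets of `G`. The limit
is isometric since `φ` is, and its range is closed and contains every `b_i`, because the
elements `c` approximating `b_i` at stage `n` are kept under control from then on.
-/

open Filter Topology Set

lemma Unitary.star_mul_cancel_left {R : Type*} [Monoid R] [StarMul R] {u : R}
    (hu : u ∈ unitary R) (x : R) : star u * (u * x) = x := by
  rw [← mul_assoc, Unitary.star_mul_self_of_mem hu, one_mul]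

lemma Unitary.dist_mul_mul {B : Type*} [CStarAlgebra B] {u v : B} (hu : u ∈ unitary B)
    (hv : v ∈ unitary B) (x y : B) : dist (u * x * v) (u * y * v) = dist x y := by
  rw [dist_eq_norm, dist_eq_norm, ← sub_mul, ← mul_sub, CStarRing.norm_mul_mem_unitary _ hv,
    CStarRing.norm_mem_unitary_mul _ hu]

lemma Unitary.norm_mul_sub_mul {B : Type*} [CStarAlgebra B] (u : unitary B) (x : B) :
    ‖u * x - x * u‖ = dist (u * x * star (u : B)) x := by
  rw [dist_eq_norm, ← CStarRing.norm_mul_coe_unitary _ (star u), Unitary.coe_star, sub_mul,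
    mul_assoc x, Unitary.mul_star_self_of_mem u.2, mul_one]

lemma Unitary.dist_star_mul_mul {B : Type*} [CStarAlgebra B] (u : unitary B) (x y : B) :
    dist (star (u : B) * x * u) y = dist x (u * y * star (u : B)) := by
  rw [← Unitary.dist_mul_mul u.2 (Unitary.star_mem u.2)]
  simp only [← mul_assoc, Unitary.mul_star_self_of_mem u.2, one_mul]
  simp only [mul_assoc, Unitary.mul_star_self_of_mem u.2, mul_one]

lemma Metric.tendstoUniformlyOn_iff_le {ι β α : Type*} [PseudoMetricSpace α] {F : ι → β → α}
    {f : β → α} {p : Filter ι} {s : Set β} :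
    TendstoUniformlyOn F f p s ↔ ∀ ε > 0, ∀ᶠ n in p, ∀ x ∈ s, dist (f x) (F n x) ≤ ε := by
  rw [Metric.tendstoUniformlyOn_iff]
  refine ⟨fun h ε hε => (h ε hε).mono fun n hn x hx => (hn x hx).le, fun h ε hε => ?_⟩
  exact (h (ε / 2) (half_pos hε)).mono fun n hn x hx => (hn x hx).trans_lt (half_lt_self hε)

lemma Dense.cauchySeq_of_lipschitzWith_one {ι X Y : Type*} [SemilatticeSup ι] [Nonempty ι]
    [PseudoMetricSpace X] [PseudoMetricSpace Y] {F : ι → X → Y} (hF : ∀ i, LipschitzWith 1 (F i))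
    {D : Set X} (hD : Dense D) (hc : ∀ y ∈ D, CauchySeq fun i => F i y) (x : X) :
    CauchySeq fun i => F i x := by
  refine Metric.cauchySeq_iff.2 fun ε hε => ?_
  obtain ⟨y, hxy, hy⟩ := Metric.dense_iff.1 hD x (ε / 3) (by positivity)
  obtain ⟨N, hN⟩ := Metric.cauchySeq_iff.1 (hc y hy) (ε / 3) (by positivity)
  refine ⟨N, fun m hm n hn => ?_⟩
  have hxy : dist x y < ε / 3 := by rwa [dist_comm, ← Metric.mem_ball]
  have hm' := (hF m).dist_le_mul x y
  have hn' := (hF n).dist_le_mul y x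
  simp only [NNReal.coe_one, one_mul] at hm' hn'
  linarith [dist_triangle4 (F m x) (F m y) (F n y) (F n x), hN m hm n hn, dist_comm x y]

section HalvingSteps

variable {X : Type*} [PseudoMetricSpace X]

def HasHalvingSteps (f : ℝ → X) (N : ℕ) : Prop :=
  ∀ n ≥ N, ∀ t ∈ Icc (n : ℝ) (n + 1), dist (f t) (f n) ≤ (1 / 2) ^ (n + 1)

namespace HasHalvingSteps

variable {f : ℝ → X} {N : ℕ}

lemma dist_le (h : HasHalvingSteps f N) {n : ℕ} (hn : N ≤ n) {t : ℝ} (ht : (n : ℝ) ≤ t) :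
    dist (f t) (f n) ≤ (1 / 2) ^ n := by
  have key : ∀ m, n ≤ m → ∀ t ∈ Icc (n : ℝ) (m + 1),
      dist (f t) (f n) ≤ (1 / 2) ^ n - (1 / 2) ^ (m + 1) := by
    intro m hm
    induction m, hm using Nat.le_induction with
    | base =>
      intro t ht
      have := h n hn t ht
      rw [pow_succ] at this ⊢
      linarith
    | succ m hm ih =>
      intro t ht
      obtain ⟨ht₁, ht₂⟩ := ht
      push_cast at ht₂
      have hpow : (1 / 2 : ℝ) ^ (m + 1 + 1) = (1 / 2) ^ (m + 1) / 2 := by rw [pow_succ]; ring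
      have hpos : (0 : ℝ) < (1 / 2) ^ (m + 1) := by positivity
      rcases le_total t (m + 1) with hle | hge
      · linarith [ih t ⟨ht₁, hle⟩]
      · have h1 := h (m + 1) (by omega) t ⟨by push_cast; linarith, by push_cast; linarith⟩
        have h2 := ih (m + 1) ⟨by linarith [(Nat.cast_le (α := ℝ)).2 hm], le_rfl⟩
        push_cast at h1
        linarith [dist_triangle (f t) (f (m + 1)) (f n)]
  have hfloor : n ≤ ⌊t⌋₊ := Nat.le_floor ht
  have := key ⌊t⌋₊ hfloor t ⟨ht, (Nat.lt_floor_add_one t).le⟩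
  linarith [pow_pos (by norm_num : (0 : ℝ) < 1 / 2) (⌊t⌋₊ + 1)]

lemma cauchySeq (h : HasHalvingSteps f N) : CauchySeq f := by
  refine Metric.cauchySeq_iff'.2 fun ε hε => ?_
  obtain ⟨n, hn⟩ := exists_pow_lt_of_lt_one hε (by norm_num : (1 / 2 : ℝ) < 1)
  refine ⟨(max N n : ℕ), fun t ht => (h.dist_le (le_max_left _ _) ht).trans_lt ?_⟩
  exact (pow_le_pow_of_le_one (by norm_num) (by norm_num) (le_max_right _ _)).trans_lt hn

lemma dist_le_of_tendsto (h : HasHalvingSteps f N) {L : X} (hL : Tendsto f atTop (𝓝 L))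
    {n : ℕ} (hn : N ≤ n) {t : ℝ} (ht : (n : ℝ) ≤ t) : dist (f t) L ≤ 2 * (1 / 2) ^ n := by
  have hlim : dist L (f n) ≤ (1 / 2) ^ n :=
    le_of_tendsto (hL.dist tendsto_const_nhds)
      ((eventually_ge_atTop (n : ℝ)).mono fun s hs => h.dist_le hn hs)
  linarith [dist_triangle (f t) (f n) L, h.dist_le hn ht, dist_comm L (f n)]

end HasHalvingSteps

end HalvingSteps

section FloorConcat

variable {X : Type*}

noncomputable def floorConcat (γ : ℕ → ℝ → X) (t : ℝ) : X :=
  γ ⌊t⌋₊ (t - ⌊t⌋₊)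

lemma floorConcat_of_lt_one (γ : ℕ → ℝ → X) {t : ℝ} (ht : t < 1) : floorConcat γ t = γ 0 t := by
  simp [floorConcat, Nat.floor_eq_zero.2 ht]

variable {γ : ℕ → ℝ → X}

lemma floorConcat_of_mem_Icc (hγ : ∀ n, γ n 1 = γ (n + 1) 0) (n : ℕ) {t : ℝ}
    (ht : t ∈ Icc (n : ℝ) (n + 1)) : floorConcat γ t = γ n (t - n) := by
  rcases ht.2.lt_or_eq with hlt | rfl
  · rw [floorConcat, (Nat.floor_eq_iff (n.cast_nonneg.trans ht.1)).2 ⟨ht.1, hlt⟩]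
  · have hfloor : ⌊(n : ℝ) + 1⌋₊ = n + 1 := by exact_mod_cast Nat.floor_natCast (n + 1)
    simp [floorConcat, hfloor, hγ n]

lemma continuous_floorConcat [TopologicalSpace X] (hcont : ∀ n, Continuous (γ n))
    (hγ : ∀ n, γ n 1 = γ (n + 1) 0) : Continuous (floorConcat γ) := by
  have hIic : ∀ N : ℕ, ContinuousOn (floorConcat γ) (Iic ((N : ℝ) + 1)) := by
    intro N
    induction N with
    | zero =>
      refine (hcont 0).continuousOn.congr fun t ht => ?_
      rcases (mem_Iic.1 ht).lt_or_eq with h | h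
      · exact floorConcat_of_lt_one γ (by simpa using h)
      · rw [floorConcat_of_mem_Icc hγ 0 ⟨by simp [h], h.le⟩]
        simp
    | succ N ih =>
      have hsplit : Iic (((N + 1 : ℕ) : ℝ) + 1) =
          Iic ((N : ℝ) + 1) ∪ Icc ((N : ℝ) + 1) (N + 1 + 1) := by
        rw [Iic_union_Icc_eq_Iic (by linarith)]
        push_cast
        rfl
      rw [hsplit]
      refine ih.union_of_isClosed ?_ isClosed_Iic isClosed_Icc
      refine ((hcont (N + 1)).comp (continuous_sub_right ((N + 1 : ℕ) : ℝ))).continuousOn.congr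
        fun t ht => floorConcat_of_mem_Icc hγ (N + 1) (by push_cast; exact ht)
  exact continuous_iff_continuousAt.2 fun t =>
    (hIic ⌈t⌉₊).continuousAt (Iic_mem_nhds (by linarith [Nat.le_ceil t]))

end FloorConcat

namespace CocycleMorphism

variable {G A B : Type*} [Group G] [TopologicalSpace G] [CStarAlgebra A] [CStarAlgebra B]
  {Sα : TwistedAction G A} {Sβ : TwistedAction G B}

lemma _root_.TwistedAction.map_mem_unitary (S : TwistedAction G B) (g : G) (w : unitary B) :
    S.α g w ∈ unitary B :=
  Unitary.map_mem (S.α g) w.2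

noncomputable def conj (P : CocycleMorphism Sα Sβ) (w : unitary B) : CocycleMorphism Sα Sβ where
  φ := (Unitary.conjStarAlgAut ℂ B w : B →⋆ₙₐ[ℂ] B).comp P.φ
  u g := w * P.u g * star (Sβ.α g w)
  u_mem g := mul_mem (mul_mem w.2 (P.u_mem g)) (Unitary.star_mem (Sβ.map_mem_unitary g w))
  u_cont := (continuous_const.mul P.u_cont).mul ((Sβ.α_cont w).star)
  equivariance g a := by
    have hβ := Unitary.star_mul_cancel_left (Sβ.map_mem_unitary g w)
    simp only [NonUnitalStarAlgHom.comp_apply, NonUnitalStarAlgHom.coe_coe,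
      Unitary.conjStarAlgAut_apply, map_mul, map_star, star_mul, star_star, mul_assoc, hβ,
      Unitary.star_mul_cancel_left w.2, ← P.equivariance g a]
  cocycle g h := by
    have hplus : plusMap ((Unitary.conjStarAlgAut ℂ B w : B →⋆ₙₐ[ℂ] B).comp P.φ) (Sα.u g h) =
        w * plusMap P.φ (Sα.u g h) * star w := by
      simp [plusMap, mul_add, add_mul, mul_sub, sub_mul]
    rw [hplus, P.cocycle]
    simp only [map_mul, map_star, Sβ.α_mul g h, star_mul, star_star, mul_assoc,
      Unitary.star_mul_cancel_left (Sβ.map_mem_unitary g w),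
      Unitary.star_mul_cancel_left (Sβ.map_mem_unitary (g * h) w),
      Unitary.star_mul_cancel_left (Sβ.u_mem g h), Unitary.coe_star]

@[simp] lemma conj_φ_apply (P : CocycleMorphism Sα Sβ) (w : unitary B) (a : A) :
    (P.conj w).φ a = w * P.φ a * star (w : B) :=
  rfl

@[simp] lemma conj_u_apply (P : CocycleMorphism Sα Sβ) (w : unitary B) (g : G) :
    (P.conj w).u g = w * P.u g * star (Sβ.α g w) :=
  rfl

lemma dist_conj_mul_φ (P : CocycleMorphism Sα Sβ) (v w : unitary B) (a : A) :
    dist ((P.conj (v * w)).φ a) ((P.conj v).φ a) = dist ((P.conj w).φ a) (P.φ a) := by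
  simpa [mul_assoc] using Unitary.dist_mul_mul v.2 (Unitary.star_mem v.2) ((P.conj w).φ a) (P.φ a)

lemma dist_conj_mul_u (P : CocycleMorphism Sα Sβ) (v w : unitary B) (g : G) :
    dist ((P.conj (v * w)).u g) ((P.conj v).u g) = dist ((P.conj w).u g) (P.u g) := by
  simpa [mul_assoc] using Unitary.dist_mul_mul v.2
    (Unitary.star_mem (Sβ.map_mem_unitary g v)) ((P.conj w).u g) (P.u g)

lemma isometry_conj_φ {P : CocycleMorphism Sα Sβ} (hinj : Function.Injective P.φ)
    (w : unitary B) : Isometry (P.conj w).φ :=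
  AddMonoidHomClass.isometry_of_norm _ fun a => by
    simp [CStarRing.norm_mul_mem_unitary _ (Unitary.star_mem w.2),
      NonUnitalStarAlgHom.norm_map _ hinj]

noncomputable def ofTendsto {ι : Type*} {l : Filter ι} [l.NeBot] (Q : ι → CocycleMorphism Sα Sβ)
    (ψ : A → B) (v : G → B) (hψ : ∀ a, Tendsto (fun i => (Q i).φ a) l (𝓝 (ψ a)))
    (hv : ∀ g, Tendsto (fun i => (Q i).u g) l (𝓝 (v g))) (hv_cont : Continuous v) :
    CocycleMorphism Sα Sβ where
  φ :=
    { toFun := ψ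
      map_smul' c x := tendsto_nhds_unique (hψ (c • x)) (by simpa using (hψ x).const_smul c)
      map_zero' := tendsto_nhds_unique (hψ 0) (by simp)
      map_add' x y := tendsto_nhds_unique (hψ (x + y)) (by simpa using (hψ x).add (hψ y))
      map_mul' x y := tendsto_nhds_unique (hψ (x * y)) (by simpa using (hψ x).mul (hψ y))
      map_star' x :=
        tendsto_nhds_unique (hψ (star x)) (by simpa only [map_star] using (hψ x).star) }
  u := v
  u_mem g := isClosed_unitary.mem_of_tendsto (hv g) (.of_forall fun i => (Q i).u_mem g)
  u_cont := hv_cont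
  equivariance g a := by
    refine tendsto_nhds_unique ?_ (hψ (Sα.α g a))
    simp only [← (Q _).equivariance]
    exact ((hv g).mul (((StarAlgEquiv.isometry (Sβ.α g)).continuous.tendsto _).comp (hψ a))).mul
      (hv g).star
  cocycle g h := by
    refine tendsto_nhds_unique (((hψ _).add_const 1).sub (hψ 1)) ?_
    change Tendsto (fun i => plusMap (Q i).φ (Sα.u g h)) l _
    simp only [(Q _).cocycle]
    exact (((hv g).mul (((StarAlgEquiv.isometry (Sβ.α g)).continuous.tendsto _).comp (hv h))).mul
      tendsto_const_nhds).mul (hv _).star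

lemma asympUEquiv_iff (P : CocycleMorphism Sα Sβ) (ψ : A → B) (v : G → B) :
    AsympUEquiv Sβ P.φ P.u ψ v ↔ ∃ w : ℝ → unitary B, Continuous w ∧
      (∀ a, Tendsto (fun t => (P.conj (w t)).φ a) atTop (𝓝 (ψ a))) ∧
      ∀ L : Set G, IsCompact L → TendstoUniformlyOn (fun t => (P.conj (w t)).u) v atTop L := by
  have hφ_iff (w : ℝ → unitary B) (a : A) :
      Tendsto (fun t => (P.conj (w t)).φ a) atTop (𝓝 (ψ a)) ↔
        Tendsto (fun t => ‖ψ a - w t * P.φ a * star (w t : B)‖) atTop (𝓝 0) := by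
    rw [tendsto_iff_norm_sub_tendsto_zero]
    simp only [conj_φ_apply, norm_sub_rev (ψ a)]
  simp only [Metric.tendstoUniformlyOn_iff_le, conj_u_apply, dist_eq_norm, hφ_iff]
  constructor
  · rintro ⟨w, hw, hwu, hφ, hu⟩
    exact ⟨fun t => ⟨w t, hwu t⟩, hw.subtype_mk _, hφ, hu⟩
  · rintro ⟨w, hw, hφ, hu⟩
    exact ⟨fun t => w t, continuous_subtype_val.comp hw, fun t => (w t).2, hφ, hu⟩

def HasApproxIntertwiningPaths (P : CocycleMorphism Sα Sβ) : Prop :=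
  ∀ (FA : Finset A) (FB : Finset B) (L : Set G), IsCompact L → ∀ ε > (0 : ℝ),
    ∃ z : ℝ → unitary B, Continuous z ∧ z 0 = 1 ∧
      (∀ a ∈ FA, ∀ t ∈ Icc (0 : ℝ) 1, dist ((P.conj (z t)).φ a) (P.φ a) ≤ ε) ∧
      (∀ b ∈ FB, Metric.infDist (star (z 1 : B) * b * z 1) (range P.φ) ≤ ε) ∧
      (∀ g ∈ L, ∀ t ∈ Icc (0 : ℝ) 1, dist ((P.conj (z t)).u g) (P.u g) ≤ ε)

lemma hasApproxIntertwiningPaths_iff (P : CocycleMorphism Sα Sβ) :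
    (∀ (FA : Finset A) (FB : Finset B) (K : Set G), IsCompact K → ∀ ε > (0 : ℝ),
      ∃ z : ℝ → B, Continuous z ∧ (∀ t, z t ∈ unitary B) ∧ z 0 = 1 ∧
        (∀ a ∈ FA, ∀ t ∈ Set.Icc (0 : ℝ) 1, ‖z t * P.φ a - P.φ a * z t‖ ≤ ε) ∧
        (∀ b ∈ FB, Metric.infDist (star (z 1) * b * z 1) (Set.range P.φ) ≤ ε) ∧
        (∀ g ∈ K, ∀ t ∈ Set.Icc (0 : ℝ) 1,
          ‖P.u g - z t * P.u g * star (Sβ.α g (z t))‖ ≤ ε)) ↔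
      P.HasApproxIntertwiningPaths := by
  have hφ (z : unitary B) (a : A) : ‖z * P.φ a - P.φ a * z‖ = dist ((P.conj z).φ a) (P.φ a) :=
    Unitary.norm_mul_sub_mul z (P.φ a)
  have hu (z : unitary B) (g : G) :
      ‖P.u g - z * P.u g * star (Sβ.α g z)‖ = dist ((P.conj z).u g) (P.u g) := by
    rw [dist_comm, dist_eq_norm, conj_u_apply]
  refine forall₄_congr fun FA FB L _ => forall₂_congr fun ε _ => ⟨?_, ?_⟩
  · rintro ⟨z, hz, hzu, h0, hzφ, hzb, hzu'⟩
    refine ⟨fun t => ⟨z t, hzu t⟩, hz.subtype_mk _, Subtype.ext h0, ?_, hzb, ?_⟩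
    · exact fun a ha t ht => (hφ ⟨z t, hzu t⟩ a).symm.trans_le (hzφ a ha t ht)
    · exact fun g hg t ht => (hu ⟨z t, hzu t⟩ g).symm.trans_le (hzu' g hg t ht)
  · rintro ⟨z, hz, h0, hzφ, hzb, hzu⟩
    refine ⟨fun t => z t, continuous_subtype_val.comp hz, fun t => (z t).2,
      congrArg Subtype.val h0, ?_, hzb, ?_⟩
    · exact fun a ha t ht => (hφ (z t) a).trans_le (hzφ a ha t ht)
    · exact fun g hg t ht => (hu (z t) g).trans_le (hzu g hg t ht)

lemma hasApproxIntertwiningPaths_of_tendsto {P Θ : CocycleMorphism Sα Sβ}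
    (hΘ : Function.Surjective Θ.φ) {w : ℝ → unitary B} (hw : Continuous w)
    (hφ : ∀ a, Tendsto (fun t => (P.conj (w t)).φ a) atTop (𝓝 (Θ.φ a)))
    (hu : ∀ L : Set G, IsCompact L → TendstoUniformlyOn (fun t => (P.conj (w t)).u) Θ.u atTop L) :
    P.HasApproxIntertwiningPaths := by
  intro FA FB L hL ε hε
  have hφ' : ∀ᶠ r in atTop, ∀ a ∈ FA, dist ((P.conj (w r)).φ a) (Θ.φ a) < ε / 2 :=
    (Finset.eventually_all FA).2 fun a _ => Metric.tendsto_nhds.1 (hφ a) _ (half_pos hε)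
  have hu' : ∀ᶠ r in atTop, ∀ g ∈ L, dist ((P.conj (w r)).u g) (Θ.u g) < ε / 2 :=
    (Metric.tendstoUniformlyOn_iff.1 (hu L hL) _ (half_pos hε)).mono fun r hr g hg =>
      dist_comm (Θ.u g) _ ▸ hr g hg
  obtain ⟨s, hs⟩ := eventually_atTop.1 (hφ'.and hu')
  choose c hc using fun b : B => hΘ (w s * b * star (w s : B))
  obtain ⟨r, hr⟩ := eventually_atTop.1 ((Finset.eventually_all FB).2 fun b _ =>
    Metric.tendsto_nhds.1 (hφ (c b)) ε hε)
  set R := max r s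
  let ρ (t : ℝ) : ℝ := s + t * (R - s)
  have hρ : ∀ t ∈ Icc (0 : ℝ) 1, s ≤ ρ t := fun t ht =>
    le_add_of_nonneg_right (mul_nonneg ht.1 (sub_nonneg.2 (le_max_right r s)))
  refine ⟨fun t => star (w s) * w (ρ t), by fun_prop, by simp [ρ], fun a ha t ht => ?_,
    fun b hb => ?_, fun g hg t ht => ?_⟩
  · rw [← dist_conj_mul_φ _ (w s), Unitary.star_eq_inv, mul_inv_cancel_left]
    linarith [dist_triangle_right ((P.conj (w (ρ t))).φ a) ((P.conj (w s)).φ a) (Θ.φ a),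
      (hs _ (hρ t ht)).1 a ha, (hs s le_rfl).1 a ha]
  · have hz1 : star (star (w s : B) * w (ρ 1)) * b * (star (w s : B) * w (ρ 1)) =
        star (w R : B) * Θ.φ (c b) * w R := by
      simp only [ρ, hc, one_mul, add_sub_cancel, star_mul, star_star, mul_assoc]
    simp only [Submonoid.coe_mul, Unitary.coe_star, hz1]
    refine (Metric.infDist_le_dist_of_mem (mem_range_self (c b))).trans ?_
    rw [Unitary.dist_star_mul_mul, dist_comm]
    exact (hr R (le_max_left r s) b hb).le
  · rw [← dist_conj_mul_u _ (w s), Unitary.star_eq_inv, mul_inv_cancel_left]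
    linarith [dist_triangle_right ((P.conj (w (ρ t))).u g) ((P.conj (w s)).u g) (Θ.u g),
      (hs _ (hρ t ht)).2 g hg, (hs s le_rfl).2 g hg]

structure IsIntertwiningPath (P : CocycleMorphism Sα Sβ) (a : ℕ → A) (b : ℕ → B)
    (K : CompactExhaustion G) (W : ℝ → unitary B) (S : ℕ → Finset A) : Prop where
  continuous : Continuous W
  monotone : Monotone S
  mem : ∀ i, a i ∈ S i
  dist_φ_le : ∀ n, ∀ x ∈ S n, ∀ t ∈ Icc (n : ℝ) (n + 1),
    dist ((P.conj (W t)).φ x) ((P.conj (W n)).φ x) ≤ (1 / 2) ^ (n + 1)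
  dist_u_le : ∀ n, ∀ g ∈ K n, ∀ t ∈ Icc (n : ℝ) (n + 1),
    dist ((P.conj (W t)).u g) ((P.conj (W n)).u g) ≤ (1 / 2) ^ (n + 1)
  exists_near : ∀ n, ∀ i ≤ n, ∃ c ∈ S (n + 1),
    dist (b i) ((P.conj (W (n + 1))).φ c) < (1 / 2) ^ n

namespace IsIntertwiningPath

variable {P : CocycleMorphism Sα Sβ} {a : ℕ → A} {b : ℕ → B} {K : CompactExhaustion G}
  {W : ℝ → unitary B} {S : ℕ → Finset A}

lemma hasHalvingSteps_φ (hP : P.IsIntertwiningPath a b K W S) {j : ℕ} {x : A} (hx : x ∈ S j) :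
    HasHalvingSteps (fun t => (P.conj (W t)).φ x) j :=
  fun n hn t ht => hP.dist_φ_le n x (hP.monotone hn hx) t ht

lemma hasHalvingSteps_u (hP : P.IsIntertwiningPath a b K W S) {j : ℕ} {g : G} (hg : g ∈ K j) :
    HasHalvingSteps (fun t => (P.conj (W t)).u g) j :=
  fun n hn t ht => hP.dist_u_le n g (K.subset hn hg) t ht

lemma exists_tendsto_φ (hP : P.IsIntertwiningPath a b K W S) (hinj : Function.Injective P.φ)
    (ha : DenseRange a) (x : A) : ∃ y, Tendsto (fun t => (P.conj (W t)).φ x) atTop (𝓝 y) := by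
  refine cauchySeq_tendsto_of_complete (ha.cauchySeq_of_lipschitzWith_one
    (fun t => (isometry_conj_φ hinj (W t)).lipschitz) ?_ x)
  rintro _ ⟨i, rfl⟩
  exact (hP.hasHalvingSteps_φ (hP.mem i)).cauchySeq

lemma exists_tendstoUniformlyOn_u (hP : P.IsIntertwiningPath a b K W S) :
    ∃ v : G → B, ∀ n, TendstoUniformlyOn (fun t => (P.conj (W t)).u) v atTop (K n) := by
  choose v hv using fun g =>
    cauchySeq_tendsto_of_complete (hP.hasHalvingSteps_u (K.mem_find g)).cauchySeq
  refine ⟨v, fun n => Metric.tendstoUniformlyOn_iff.2 fun ε hε => ?_⟩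
  obtain ⟨m, hm⟩ := exists_pow_lt_of_lt_one (half_pos hε) (by norm_num : (1 / 2 : ℝ) < 1)
  filter_upwards [eventually_ge_atTop ((max n m : ℕ) : ℝ)] with t ht g hg
  have hle := (hP.hasHalvingSteps_u hg).dist_le_of_tendsto (hv g) (le_max_left n m) ht
  have hpow : (1 / 2 : ℝ) ^ max n m ≤ (1 / 2) ^ m :=
    pow_le_pow_of_le_one (by norm_num) (by norm_num) (le_max_right n m)
  rw [dist_comm]
  linarith

lemma mem_closure_range (hP : P.IsIntertwiningPath a b K W S) {ψ : A → B}
    (hψ : ∀ x, Tendsto (fun t => (P.conj (W t)).φ x) atTop (𝓝 (ψ x))) (i : ℕ) :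
    b i ∈ closure (range ψ) := by
  refine Metric.mem_closure_iff.2 fun ε hε => ?_
  obtain ⟨m, hm⟩ := exists_pow_lt_of_lt_one (half_pos hε) (by norm_num : (1 / 2 : ℝ) < 1)
  set n := max i m
  obtain ⟨c, hc, hbc⟩ := hP.exists_near n i (le_max_left i m)
  have hcψ := (hP.hasHalvingSteps_φ hc).dist_le_of_tendsto (hψ c) le_rfl (by push_cast; rfl)
  have hpow : (1 / 2 : ℝ) ^ n ≤ (1 / 2) ^ m :=
    pow_le_pow_of_le_one (by norm_num) (by norm_num) (le_max_right i m)
  rw [pow_succ] at hcψ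
  exact ⟨ψ c, ⟨c, rfl⟩, by linarith [dist_triangle (b i) ((P.conj (W (n + 1))).φ c) (ψ c)]⟩

lemma exists_cocycleConjugacy [LocallyCompactSpace G] (hP : P.IsIntertwiningPath a b K W S)
    (hinj : Function.Injective P.φ) (ha : DenseRange a) (hb : DenseRange b) :
    ∃ Θ : CocycleMorphism Sα Sβ, Function.Bijective Θ.φ ∧
      (∀ x, Tendsto (fun t => (P.conj (W t)).φ x) atTop (𝓝 (Θ.φ x))) ∧
      ∀ L : Set G, IsCompact L → TendstoUniformlyOn (fun t => (P.conj (W t)).u) Θ.u atTop L := by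
  choose ψ hψ using hP.exists_tendsto_φ hinj ha
  obtain ⟨v, hv⟩ := hP.exists_tendstoUniformlyOn_u
  have hvL : ∀ L : Set G, IsCompact L →
      TendstoUniformlyOn (fun t => (P.conj (W t)).u) v atTop L := fun L hL =>
    let ⟨n, hn⟩ := K.exists_superset_of_isCompact hL
    (hv n).mono hn
  have hv_cont : Continuous v := (tendstoLocallyUniformly_iff_forall_isCompact.2 hvL).continuous
    (.of_forall fun t => (P.conj (W t)).u_cont)
  let Θ := ofTendsto (fun t => P.conj (W t)) ψ v hψ
    (fun g => (hv (K.find g)).tendsto_at (K.mem_find g)) hv_cont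
  have hiso : Isometry ψ := Isometry.of_dist_eq fun x y =>
    tendsto_nhds_unique ((hψ x).dist (hψ y))
      ((tendsto_congr fun t => (isometry_conj_φ hinj (W t)).dist_eq x y).2 tendsto_const_nhds)
  have hsurj : Function.Surjective ψ := by
    rw [← range_eq_univ, ← hiso.isClosedEmbedding.isClosed_range.closure_eq, ← univ_subset_iff,
      ← hb.closure_eq]
    exact closure_minimal (range_subset_iff.2 (hP.mem_closure_range hψ)) isClosed_closure
  exact ⟨Θ, ⟨hiso.injective, hsurj⟩, hψ, hvL⟩

end IsIntertwiningPath

namespace HasApproxIntertwiningPaths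

variable {P : CocycleMorphism Sα Sβ}

lemma exists_step (hP : P.HasApproxIntertwiningPaths) (b : ℕ → B) {L : Set G} (hL : IsCompact L)
    (n : ℕ) (V : unitary B) (S : Finset A) :
    ∃ z : ℝ → unitary B, ∃ T : Finset A, Continuous z ∧ z 0 = 1 ∧
      (∀ x ∈ S, ∀ t ∈ Icc (0 : ℝ) 1,
        dist ((P.conj (V * z t)).φ x) ((P.conj V).φ x) ≤ (1 / 2) ^ (n + 1)) ∧
      (∀ g ∈ L, ∀ t ∈ Icc (0 : ℝ) 1,
        dist ((P.conj (V * z t)).u g) ((P.conj V).u g) ≤ (1 / 2) ^ (n + 1)) ∧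
      ∀ i ≤ n, ∃ c ∈ T, dist (b i) ((P.conj (V * z 1)).φ c) < (1 / 2) ^ n := by
  classical
  obtain ⟨z, hz, h0, hzφ, hzb, hzu⟩ := hP S ((Finset.range (n + 1)).image
    fun i => star (V : B) * b i * V) L hL ((1 / 2) ^ (n + 1)) (by positivity)
  have hnear (i : Fin (n + 1)) : ∃ c, dist (b i) ((P.conj (V * z 1)).φ c) < (1 / 2) ^ n := by
    have hlt : Metric.infDist (star (z 1 : B) * (star (V : B) * b i * V) * z 1) (range P.φ) <
        (1 / 2) ^ n :=
      (hzb _ (Finset.mem_image_of_mem _ (Finset.mem_range.2 i.2))).trans_lt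
        (pow_lt_pow_right_of_lt_one₀ (by norm_num) (by norm_num) n.lt_succ_self)
    obtain ⟨_, ⟨c, rfl⟩, hc⟩ := (Metric.infDist_lt_iff ⟨_, mem_range_self 0⟩).1 hlt
    refine ⟨c, ?_⟩
    rw [conj_φ_apply, ← Unitary.dist_star_mul_mul]
    simpa only [Submonoid.coe_mul, star_mul, mul_assoc] using hc
  choose c hc using hnear
  refine ⟨z, Finset.univ.image c, hz, h0, fun x hx t ht => ?_, fun g hg t ht => ?_,
    fun i hi => ⟨c ⟨i, Nat.lt_succ_of_le hi⟩, Finset.mem_image_of_mem _ (Finset.mem_univ _),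
      hc ⟨i, Nat.lt_succ_of_le hi⟩⟩⟩
  · rw [dist_conj_mul_φ]
    exact hzφ x hx t ht
  · rw [dist_conj_mul_u]
    exact hzu g hg t ht

lemma exists_isIntertwiningPath (hP : P.HasApproxIntertwiningPaths) (a : ℕ → A) (b : ℕ → B)
    (K : CompactExhaustion G) : ∃ W S, P.IsIntertwiningPath a b K W S := by
  classical
  choose z T hz h0 hzφ hzu hnear using fun n => hP.exists_step b (K.isCompact n) n
  -- the unitary reached and the finite set controlled after `n` steps
  let st : ℕ → unitary B × Finset A := fun n => Nat.rec (1, {a 0})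
    (fun n p => (p.1 * z n p.1 p.2 1, insert (a (n + 1)) (p.2 ∪ T n p.1 p.2))) n
  let V n := (st n).1
  let S n := (st n).2
  let γ : ℕ → ℝ → unitary B := fun n t => V n * z n (V n) (S n) t
  have hγ n : γ n 1 = γ (n + 1) 0 := by simp [γ, h0, V, S, st]
  have hW (n : ℕ) : ∀ t ∈ Icc (n : ℝ) (n + 1), floorConcat γ t = V n * z n (V n) (S n) (t - n) :=
    fun t ht => floorConcat_of_mem_Icc hγ n ht
  have hWn (n : ℕ) : floorConcat γ n = V n := by
    rw [hW n n ⟨le_rfl, by linarith⟩, sub_self, h0, mul_one]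
  have hWn' (n : ℕ) : floorConcat γ (n + 1) = V n * z n (V n) (S n) 1 := by
    rw [hW n (n + 1) ⟨by linarith, le_rfl⟩, add_sub_cancel_left]
  have hIcc {n : ℕ} {t : ℝ} (ht : t ∈ Icc (n : ℝ) (n + 1)) : t - n ∈ Icc (0 : ℝ) 1 :=
    ⟨sub_nonneg.2 ht.1, by linarith [ht.2]⟩
  refine ⟨floorConcat γ, S, continuous_floorConcat (fun n => continuous_const.mul (hz _ _ _)) hγ,
    monotone_nat_of_le_succ fun n => ?_, fun i => ?_, fun n x hx t ht => ?_,
    fun n g hg t ht => ?_, fun n i hi => ?_⟩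
  · exact (Finset.subset_union_left).trans (Finset.subset_insert _ _)
  · cases i with
    | zero => exact Finset.mem_singleton_self _
    | succ i => exact Finset.mem_insert_self _ _
  · rw [hW n t ht, hWn]
    exact hzφ n _ _ x hx _ (hIcc ht)
  · rw [hW n t ht, hWn]
    exact hzu n _ _ g hg _ (hIcc ht)
  · obtain ⟨c, hc, hbc⟩ := hnear n (V n) (S n) i hi
    exact ⟨c, Finset.mem_insert_of_mem (Finset.mem_union_right _ hc), by rwa [hWn']⟩

end HasApproxIntertwiningPaths

end CocycleMorphism

theorem asympUEquiv_cocycleConjugacy_iff_general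
    {G A B : Type*} [Group G] [TopologicalSpace G]
    [LocallyCompactSpace G] [SecondCountableTopology G]
    [CStarAlgebra A] [CStarAlgebra B]
    [TopologicalSpace.SeparableSpace A] [TopologicalSpace.SeparableSpace B]
    (Sα : TwistedAction G A) (Sβ : TwistedAction G B)
    (P : CocycleMorphism Sα Sβ)
    (hinj : Function.Injective P.φ) :
    (∃ Θ : CocycleMorphism Sα Sβ, Function.Bijective Θ.φ ∧
        AsympUEquiv Sβ P.φ P.u Θ.φ Θ.u)
    ↔ (∀ (FA : Finset A) (FB : Finset B) (K : Set G), IsCompact K → ∀ ε > (0 : ℝ),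
        ∃ z : ℝ → B, Continuous z ∧ (∀ t, z t ∈ unitary B) ∧ z 0 = 1 ∧
          (∀ a ∈ FA, ∀ t ∈ Set.Icc (0 : ℝ) 1, ‖z t * P.φ a - P.φ a * z t‖ ≤ ε) ∧
          (∀ b ∈ FB, Metric.infDist (star (z 1) * b * z 1) (Set.range P.φ) ≤ ε) ∧
          (∀ g ∈ K, ∀ t ∈ Set.Icc (0 : ℝ) 1,
            ‖P.u g - z t * P.u g * star (Sβ.α g (z t))‖ ≤ ε)) := by
  rw [CocycleMorphism.hasApproxIntertwiningPaths_iff]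
  constructor
  · rintro ⟨Θ, hΘ, hasymp⟩
    obtain ⟨w, hw, hφ, hu⟩ := (P.asympUEquiv_iff Θ.φ Θ.u).1 hasymp
    exact CocycleMorphism.hasApproxIntertwiningPaths_of_tendsto hΘ.2 hw hφ hu
  · intro hP
    obtain ⟨a, ha⟩ := TopologicalSpace.exists_dense_seq A
    obtain ⟨b, hb⟩ := TopologicalSpace.exists_dense_seq B
    obtain ⟨W, S, hW⟩ := hP.exists_isIntertwiningPath a b (CompactExhaustion.choice G)
    obtain ⟨Θ, hΘ, hφ, hu⟩ := hW.exists_cocycleConjugacy hinj ha hb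
    exact ⟨Θ, hΘ, (P.asympUEquiv_iff Θ.φ Θ.u).2 ⟨W, hW.continuous, hφ, hu⟩⟩

/-- A cocycle morphism `(φ,u)` between twisted actions on separable unital
C*-algebras with `φ` injective and unital is asymptotically unitarily equivalent to a cocycle
conjugacy if and only if for all finite sets `F_A ⊆ A`, `F_B ⊆ B`, every compact `K ⊆ G` and
every `ε > 0` there is a norm-continuous path of unitaries `z : [0,1] → U(B)` with `z_0 = 1`
which `ε`-commutes with `φ(F_A)`, conjugates `F_B` to within `ε` of `φ(A)` at `t = 1`, and
`ε`-fixes the cocycle `u` over `K`. -/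
theorem asympUEquiv_cocycleConjugacy_iff
    {G A B : Type*} [Group G] [TopologicalSpace G] [IsTopologicalGroup G]
    [LocallyCompactSpace G] [SecondCountableTopology G] [T2Space G]
    [CStarAlgebra A] [CStarAlgebra B]
    [TopologicalSpace.SeparableSpace A] [TopologicalSpace.SeparableSpace B]
    (Sα : TwistedAction G A) (Sβ : TwistedAction G B)
    (P : CocycleMorphism Sα Sβ)
    (hinj : Function.Injective P.φ) (hunital : P.φ 1 = 1) :
    (∃ Θ : CocycleMorphism Sα Sβ, Function.Bijective Θ.φ ∧
        AsympUEquiv Sβ P.φ P.u Θ.φ Θ.u)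
    ↔ (∀ (FA : Finset A) (FB : Finset B) (K : Set G), IsCompact K → ∀ ε > (0 : ℝ),
        ∃ z : ℝ → B, Continuous z ∧ (∀ t, z t ∈ unitary B) ∧ z 0 = 1 ∧
          (∀ a ∈ FA, ∀ t ∈ Set.Icc (0 : ℝ) 1, ‖z t * P.φ a - P.φ a * z t‖ ≤ ε) ∧
          (∀ b ∈ FB, Metric.infDist (star (z 1) * b * z 1) (Set.range P.φ) ≤ ε) ∧
          (∀ g ∈ K, ∀ t ∈ Set.Icc (0 : ℝ) 1,
            ‖P.u g - z t * P.u g * star (Sβ.α g (z t))‖ ≤ ε)) :=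
  asympUEquiv_cocycleConjugacy_iff_general Sα Sβ P hinj
end
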